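/- arXiv:1605.06259 — 6 statements merged into one kernel-verified Lean document; each statement's English description precedes it below -/
import Mathlib

section
/- The linear map φ from the filiform Lie algebra Q_{2n} to gl(2n, ℂ) defined on the basis by φ(e_1) = ∑_{k=2}^{2n-2} E_{k,k+1}, φ(e_i) = (-1)^i E_{1,i} + E_{2n-i+1,2n} for 2 ≤ i ≤ 2n-1, and φ(e_{2n}) = -2 E_{1,2n}, is an injective Lie algebra homomorphism, i.e., φ([e_i,e_j]) = φ(e_i)φ(e_j) - φ(e_j)φ(e_i) for all i,j, and φ is injective. -/
/-!
Everything reduces to the rule `E_{ij} E_{kl} = δ_{jk} E_{il}` for elementary matrices.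
`φ(e_{2n}) = -2 E_{1,2n}` is annihilated on both sides by every `φ(e_k)`, since no `φ(e_k)` has
a nonzero entry in column `1` or row `2n`; hence it is central. Multiplication by `φ(e_1)` shifts
elementary matrices, which gives `[φ(e_1), φ(e_j)] = φ(e_{j+1})`. For `2 ≤ i, j ≤ 2n - 1` the
product `φ(e_i) φ(e_j)` is `(-1)^i E_{1,2n}` if `i + j = 2n + 1` and `0` otherwise, so the
commutator is `((-1)^i - (-1)^j) E_{1,2n} = 2 (-1)^i E_{1,2n}`.
For injectivity, the entry `(1, j)` with `j ≥ 2` is nonzero in `φ(e_j)` alone and the entry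
`(2, 3)` in `φ(e_1)` alone.
-/

/-- Structure constants of the filiform Lie algebra `Q_{2n}`:
`[e_1,e_i] = -[e_i,e_1] = e_{i+1}` for `2 ≤ i ≤ 2n-2` and
`[e_{2n+1-i},e_i] = -[e_i,e_{2n+1-i}] = (-1)^i e_{2n}` for `2 ≤ i ≤ n`. -/
noncomputable def cQ (n i j k : ℕ) : ℂ :=
  (if i = 1 ∧ 2 ≤ j ∧ j ≤ 2 * n - 2 ∧ k = j + 1 then 1 else 0)
  - (if j = 1 ∧ 2 ≤ i ∧ i ≤ 2 * n - 2 ∧ k = i + 1 then 1 else 0)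
  + (if 2 ≤ j ∧ j ≤ n ∧ i = 2 * n + 1 - j ∧ k = 2 * n then (-1 : ℂ) ^ j else 0)
  - (if 2 ≤ i ∧ i ≤ n ∧ j = 2 * n + 1 - i ∧ k = 2 * n then (-1 : ℂ) ^ i else 0)
/-- The elementary `N × N` matrix with `1` in (1-based) position `(i,j)`. -/
noncomputable def elemMat (N : ℕ) (i j : ℕ) : Matrix (Fin N) (Fin N) ℂ :=
  Matrix.of fun a b => if (a : ℕ) + 1 = i ∧ (b : ℕ) + 1 = j then 1 else 0

/-- The matrices representing the basis of `Q_{2n}`: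
`φ(e_1) = ∑_{k=2}^{2n-2} E_{k,k+1}`,
`φ(e_i) = (-1)^i E_{1,i} + E_{2n-i+1,2n}` for `2 ≤ i ≤ 2n-1`,
`φ(e_{2n}) = -2 E_{1,2n}`. -/
noncomputable def MQ (n i : ℕ) : Matrix (Fin (2 * n)) (Fin (2 * n)) ℂ :=
  if i = 1 then ∑ k ∈ Finset.Icc 2 (2 * n - 2), elemMat (2 * n) k (k + 1)
  else if i = 2 * n then (-2 : ℂ) • elemMat (2 * n) 1 (2 * n)
  else ((-1 : ℂ) ^ i) • elemMat (2 * n) 1 i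
    + elemMat (2 * n) (2 * n - i + 1) (2 * n)

lemma sum_ite_and_eq_smul {ι M R : Type*} [DecidableEq ι] [AddCommMonoid M] [Semiring R]
    [Module R M] {s : Finset ι} {P : Prop} [Decidable P] {v : ι} (hv : P → v ∈ s) (c : R)
    (f : ι → M) : ∑ k ∈ s, (if P ∧ k = v then c else 0) • f k = if P then c • f v else 0 := by
  by_cases hP : P <;> simp [hP, hv]

theorem injective_sum_smul_of_entry_ne_zero_iff {ι m m' R : Type*} [Fintype ι] [Semiring R]
    [IsRightCancelMulZero R] (M : ι → Matrix m m' R) (r : ι → m) (c : ι → m')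
    (hM : ∀ i k, M k (r i) (c i) ≠ 0 ↔ k = i) :
    Function.Injective fun f : ι → R => ∑ i, f i • M i := by
  intro f g hfg
  funext i
  replace hfg := congrFun (congrFun hfg (r i)) (c i)
  have entry : ∀ f : ι → R, (∑ k, f k • M k) (r i) (c i) = f i * M i (r i) (c i) := by
    intro f
    rw [Matrix.sum_apply, Finset.sum_eq_single i (fun k _ hk => ?_) (by simp)]
    · rfl
    · rw [Matrix.smul_apply, not_not.1 (mt (hM i k).1 hk), smul_zero]
  exact mul_right_cancel₀ ((hM i i).2 rfl) ((entry f).symm.trans (hfg.trans (entry g)))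

lemma elemMat_apply (N i j : ℕ) (a b : Fin N) :
    elemMat N i j a b = if (a : ℕ) + 1 = i ∧ (b : ℕ) + 1 = j then 1 else 0 := rfl

lemma elemMat_mul (N i j k l : ℕ) :
    elemMat N i j * elemMat N k l = if j = k ∧ 1 ≤ j ∧ j ≤ N then elemMat N i l else 0 := by
  ext a b
  split_ifs with h
  · obtain ⟨rfl, hj1, hjN⟩ := h
    rw [Matrix.mul_apply, Finset.sum_eq_single ⟨j - 1, by omega⟩]
    · simp only [elemMat_apply]
      split_ifs <;> grind
    · intro c _ hc
      simp only [elemMat_apply]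
      split_ifs <;> grind
    · simp
  · rw [Matrix.mul_apply, Matrix.zero_apply]
    refine Finset.sum_eq_zero fun c _ => ?_
    simp only [elemMat_apply]
    split_ifs <;> grind

section

variable (n : ℕ)

lemma cQ_swap (i j k : ℕ) : cQ n j i k = -cQ n i j k := by
  unfold cQ; ring

lemma cQ_self (i k : ℕ) : cQ n i i k = 0 :=
  self_eq_neg.1 (cQ_swap n i i k)

lemma sum_cQ_smul_MQ (i j : ℕ) :
    ∑ k ∈ Finset.Icc 1 (2 * n), cQ n i j k • MQ n k =
      (if i = 1 ∧ 2 ≤ j ∧ j ≤ 2 * n - 2 then MQ n (j + 1) else 0)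
      - (if j = 1 ∧ 2 ≤ i ∧ i ≤ 2 * n - 2 then MQ n (i + 1) else 0)
      + (if 2 ≤ j ∧ j ≤ n ∧ i = 2 * n + 1 - j then (-1 : ℂ) ^ j • MQ n (2 * n) else 0)
      - (if 2 ≤ i ∧ i ≤ n ∧ j = 2 * n + 1 - i then (-1 : ℂ) ^ i • MQ n (2 * n) else 0) := by
  simp only [cQ, sub_smul, add_smul, Finset.sum_sub_distrib, Finset.sum_add_distrib, ← and_assoc]
  rw [sum_ite_and_eq_smul, sum_ite_and_eq_smul, sum_ite_and_eq_smul, sum_ite_and_eq_smul,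
    one_smul, one_smul] <;> simp only [Finset.mem_Icc] <;> omega

lemma MQ_one : MQ n 1 = ∑ k ∈ Finset.Icc 2 (2 * n - 2), elemMat (2 * n) k (k + 1) :=
  if_pos rfl

lemma MQ_last : MQ n (2 * n) = (-2 : ℂ) • elemMat (2 * n) 1 (2 * n) := by
  rw [MQ, if_neg (by omega), if_pos rfl]

lemma MQ_of_ne {i : ℕ} (h1 : i ≠ 1) (h2 : i ≠ 2 * n) :
    MQ n i = ((-1 : ℂ) ^ i) • elemMat (2 * n) 1 i + elemMat (2 * n) (2 * n - i + 1) (2 * n) := by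
  rw [MQ, if_neg h1, if_neg h2]

lemma MQ_one_mul_elemMat (a b : ℕ) :
    MQ n 1 * elemMat (2 * n) a b =
      if 3 ≤ a ∧ a ≤ 2 * n - 1 then elemMat (2 * n) (a - 1) b else 0 := by
  rw [MQ_one, Finset.sum_mul]
  simp_rw [elemMat_mul]
  split_ifs with h
  · rw [Finset.sum_eq_single_of_mem (a - 1) (by simp only [Finset.mem_Icc]; omega)]
    · rw [if_pos (by omega)]
    · intro k _ hk
      rw [if_neg (by omega)]
  · refine Finset.sum_eq_zero fun k hk => if_neg ?_
    simp only [Finset.mem_Icc] at hk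
    omega

lemma elemMat_mul_MQ_one (a b : ℕ) :
    elemMat (2 * n) a b * MQ n 1 =
      if 2 ≤ b ∧ b ≤ 2 * n - 2 then elemMat (2 * n) a (b + 1) else 0 := by
  rw [MQ_one, Finset.mul_sum]
  simp_rw [elemMat_mul]
  split_ifs with h
  · rw [Finset.sum_eq_single_of_mem b (by simp only [Finset.mem_Icc]; omega), if_pos (by omega)]
    intro k _ hk
    rw [if_neg (by omega)]
  · refine Finset.sum_eq_zero fun k hk => if_neg ?_
    simp only [Finset.mem_Icc] at hk
    omega

lemma MQ_last_mul (k : ℕ) : MQ n (2 * n) * MQ n k = 0 := by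
  rw [MQ_last, smul_mul_assoc]
  rcases eq_or_ne k 1 with rfl | hk1
  · rw [elemMat_mul_MQ_one, if_neg (by omega), smul_zero]
  rcases eq_or_ne k (2 * n) with rfl | hk2
  · rw [MQ_last, mul_smul_comm, elemMat_mul, if_neg (by omega), smul_zero, smul_zero]
  · rw [MQ_of_ne n hk1 hk2, mul_add, mul_smul_comm, elemMat_mul, elemMat_mul,
      if_neg (by omega), if_neg (by omega)]
    simp

lemma mul_MQ_last (k : ℕ) : MQ n k * MQ n (2 * n) = 0 := by
  rw [MQ_last, mul_smul_comm]
  rcases eq_or_ne k 1 with rfl | hk1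
  · rw [MQ_one_mul_elemMat, if_neg (by omega), smul_zero]
  rcases eq_or_ne k (2 * n) with rfl | hk2
  · rw [MQ_last, smul_mul_assoc, elemMat_mul, if_neg (by omega), smul_zero, smul_zero]
  · rw [MQ_of_ne n hk1 hk2, add_mul, smul_mul_assoc, elemMat_mul, elemMat_mul,
      if_neg (by omega), if_neg (by omega)]
    simp

lemma MQ_one_commutator {j : ℕ} (hj : 2 ≤ j) (hj' : j < 2 * n) :
    MQ n 1 * MQ n j - MQ n j * MQ n 1 = if j ≤ 2 * n - 2 then MQ n (j + 1) else 0 := by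
  rw [MQ_of_ne n (i := j) (by omega) (by omega)]
  simp only [mul_add, add_mul, mul_smul_comm, smul_mul_assoc, MQ_one_mul_elemMat,
    elemMat_mul_MQ_one]
  split_ifs <;> try omega
  · rw [MQ_of_ne n (by omega) (by omega), show 2 * n - j + 1 - 1 = 2 * n - (j + 1) + 1 by omega,
      pow_succ]
    module
  · simp

lemma MQ_mul_MQ {i j : ℕ} (hi : 2 ≤ i) (hi' : i < 2 * n) (hj : 2 ≤ j) (hj' : j < 2 * n) :
    MQ n i * MQ n j =
      if i + j = 2 * n + 1 then ((-1 : ℂ) ^ i) • elemMat (2 * n) 1 (2 * n) else 0 := by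
  rw [MQ_of_ne n (by omega) (by omega), MQ_of_ne n (by omega) (by omega)]
  simp only [add_mul, mul_add, smul_mul_assoc, mul_smul_comm, elemMat_mul]
  split_ifs <;> first | omega | simp

lemma MQ_commutator {i j : ℕ} (hi : 2 ≤ i) (hi' : i < 2 * n) (hj : 2 ≤ j) (hj' : j < 2 * n) :
    MQ n i * MQ n j - MQ n j * MQ n i =
      if i + j = 2 * n + 1 then -((-1 : ℂ) ^ i • MQ n (2 * n)) else 0 := by
  rw [MQ_mul_MQ n hi hi' hj hj', MQ_mul_MQ n hj hj' hi hi', add_comm j i]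
  split_ifs with h
  · have hpar : (-1 : ℂ) ^ j = -(-1) ^ i := by
      have hjpar : Even j ↔ Even (i + 1) := Nat.even_add.1 ⟨n + 1, by omega⟩
      rw [neg_one_pow_congr hjpar, pow_succ, mul_neg_one]
    rw [MQ_last, hpar]
    module
  · rw [sub_zero]

lemma MQ_one_apply (a b : Fin (2 * n)) :
    MQ n 1 a b = if 1 ≤ (a : ℕ) ∧ (a : ℕ) + 3 ≤ 2 * n ∧ (b : ℕ) = a + 1 then 1 else 0 := by
  rw [MQ_one, Matrix.sum_apply]
  simp only [elemMat_apply]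
  split_ifs with h
  · rw [Finset.sum_eq_single_of_mem ((a : ℕ) + 1) (by simp only [Finset.mem_Icc]; omega),
      if_pos (by omega)]
    intro m _ hm
    rw [if_neg (by omega)]
  · refine Finset.sum_eq_zero fun m hm => if_neg ?_
    simp only [Finset.mem_Icc] at hm
    omega

lemma MQ_apply_first_row_ne_zero_iff {k : ℕ} (hk : k ≤ 2 * n) {a b : Fin (2 * n)}
    (ha : (a : ℕ) = 0) (hb : (b : ℕ) ≠ 0) : MQ n k a b ≠ 0 ↔ k = b + 1 := by
  rcases eq_or_ne k 1 with rfl | hk1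
  · rw [MQ_one_apply, if_neg (by omega)]
    simp only [ne_eq, not_true_eq_false, false_iff]; omega
  rcases eq_or_ne k (2 * n) with rfl | hk2
  · rw [MQ_last, Matrix.smul_apply, elemMat_apply]
    split_ifs <;> simp <;> omega
  · rw [MQ_of_ne n hk1 hk2, Matrix.add_apply, Matrix.smul_apply, elemMat_apply, elemMat_apply]
    split_ifs <;> simp <;> omega

lemma MQ_apply_two_three_ne_zero_iff (hn : 2 ≤ n) {k : ℕ} {a b : Fin (2 * n)} (ha : (a : ℕ) = 1)
    (hb : (b : ℕ) = 2) : MQ n k a b ≠ 0 ↔ k = 1 := by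
  rcases eq_or_ne k 1 with rfl | hk1
  · rw [MQ_one_apply, if_pos (by omega)]; simp
  rcases eq_or_ne k (2 * n) with rfl | hk2
  · rw [MQ_last, Matrix.smul_apply, elemMat_apply, if_neg (by omega)]
    simp
  · rw [MQ_of_ne n hk1 hk2, Matrix.add_apply, Matrix.smul_apply, elemMat_apply, elemMat_apply]
    split_ifs <;> simp <;> omega

theorem MQ_bracket {i j : ℕ} (hi : 1 ≤ i) (hi' : i ≤ 2 * n) (hj : 1 ≤ j) (hj' : j ≤ 2 * n) :
    ∑ k ∈ Finset.Icc 1 (2 * n), cQ n i j k • MQ n k = MQ n i * MQ n j - MQ n j * MQ n i := by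
  wlog hij : i < j generalizing i j
  · rcases (not_lt.1 hij).eq_or_lt with rfl | hji
    · rw [sub_self]
      exact Finset.sum_eq_zero fun k _ => by rw [cQ_self, zero_smul]
    · simp_rw [cQ_swap n j i, neg_smul, Finset.sum_neg_distrib, this hj hj' hi hi' hji, neg_sub]
  rw [sum_cQ_smul_MQ]
  rcases eq_or_ne j (2 * n) with rfl | hj2
  · rw [MQ_last_mul, mul_MQ_last, if_neg (by omega), if_neg (by omega), if_neg (by omega),
      if_neg (by omega)]
    simp
  rcases eq_or_ne i 1 with rfl | hi1
  · rw [MQ_one_commutator n (by omega) (by omega)]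
    split_ifs <;> first | omega | simp
  · rw [MQ_commutator n (by omega) (by omega) (by omega) (by omega)]
    split_ifs <;> first | omega | simp

theorem MQ_sum_injective (hn : 2 ≤ n) :
    Function.Injective
      (fun f : Fin (2 * n) → ℂ => ∑ i : Fin (2 * n), f i • MQ n ((i : ℕ) + 1)) := by
  let r : Fin (2 * n) → Fin (2 * n) := fun i => if (i : ℕ) = 0 then ⟨1, by omega⟩ else ⟨0, by omega⟩
  let c : Fin (2 * n) → Fin (2 * n) := fun i => if (i : ℕ) = 0 then ⟨2, by omega⟩ else i
  refine injective_sum_smul_of_entry_ne_zero_iff (fun i : Fin (2 * n) => MQ n ((i : ℕ) + 1)) r c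
    fun i k => ?_
  by_cases hi : (i : ℕ) = 0
  · simp only [r, c, hi, if_true]
    rw [MQ_apply_two_three_ne_zero_iff n hn rfl rfl, Fin.ext_iff]
    omega
  · simp only [r, c, hi, if_false]
    rw [MQ_apply_first_row_ne_zero_iff n (by omega) rfl hi, Fin.ext_iff]
    omega

end

/-- The map `φ` sending `e_i` to `MQ n i`, extended linearly, is an injective
Lie algebra homomorphism from `Q_{2n}` to `gl(2n, ℂ)`: it carries each bracket
`[e_i,e_j]` to the matrix commutator, and it is injective. -/
theorem Q2n_minimal_representation (n : ℕ) (hn : 2 ≤ n) :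
    (∀ i ∈ Finset.Icc 1 (2 * n), ∀ j ∈ Finset.Icc 1 (2 * n),
      ∑ k ∈ Finset.Icc 1 (2 * n), cQ n i j k • MQ n k
        = MQ n i * MQ n j - MQ n j * MQ n i) ∧
    Function.Injective
      (fun f : Fin (2 * n) → ℂ => ∑ i : Fin (2 * n), f i • MQ n ((i : ℕ) + 1)) := by
  refine ⟨fun i hi j hj => ?_, MQ_sum_injective n hn⟩
  rw [Finset.mem_Icc] at hi hj
  exact MQ_bracket n hi.1 hi.2 hj.1 hj.2
end

section
/- The n-dimensional complex vector space with basis e_1,...,e_n and brackets [e_1,e_i] = -[e_i,e_1] = e_{i+1} for 2 ≤ i ≤ n-1 and [e_2,e_i] = -[e_i,e_2] = e_{i+2} for 3 ≤ i ≤ n-2 (all other basis brackets zero) is a Lie algebra. -/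
/-- Bilinear extension to `Fin N → ℂ` of a bracket given by structure constants
`c i j k` (1-based indices): the coefficient of `e_k` in `[e_i, e_j]`. -/
noncomputable def bilinBracket (N : ℕ) (c : ℕ → ℕ → ℕ → ℂ) (f g : Fin N → ℂ) : Fin N → ℂ :=
  fun k => ∑ i : Fin N, ∑ j : Fin N,
    f i * g j * c ((i : ℕ) + 1) ((j : ℕ) + 1) ((k : ℕ) + 1)
/-- Structure constants of the filiform Lie algebra `R_n`:
`[e_1,e_i] = -[e_i,e_1] = e_{i+1}` for `2 ≤ i ≤ n-1` and
`[e_2,e_i] = -[e_i,e_2] = e_{i+2}` for `3 ≤ i ≤ n-2`. -/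
noncomputable def cR (n i j k : ℕ) : ℂ :=
  (if i = 1 ∧ 2 ≤ j ∧ j ≤ n - 1 ∧ k = j + 1 then 1 else 0)
  - (if j = 1 ∧ 2 ≤ i ∧ i ≤ n - 1 ∧ k = i + 1 then 1 else 0)
  + (if i = 2 ∧ 3 ≤ j ∧ j ≤ n - 2 ∧ k = j + 2 then 1 else 0)
  - (if j = 2 ∧ 3 ≤ i ∧ i ≤ n - 2 ∧ k = i + 2 then 1 else 0)

lemma cR_antisym (n i j k : ℕ) : cR n i j k = - cR n j i k := by
  simp only [cR]; ring

noncomputable def E (n t b k : ℕ) : ℂ :=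
  (if b = 1 ∧ 2 ≤ t ∧ t ≤ n - 1 ∧ k = t + 1 then 1 else 0)
  + (if b = 2 ∧ 3 ≤ t ∧ t ≤ n - 2 ∧ k = t + 2 then 1 else 0)

lemma cR_big (n m b k : ℕ) (hm : 3 ≤ m) : cR n m b k = - E n m b k := by
  have h1 : m ≠ 1 := by omega
  have h2 : m ≠ 2 := by omega
  simp only [cR, E, h1, h2, false_and, if_neg, not_false_iff]
  ring

lemma cR_succ (n i j a : ℕ) : cR n i j (a+1) =
    (if (i = 1 ∧ 2 ≤ j ∧ j ≤ n - 1) ∧ a = j then 1 else 0)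
  - (if (j = 1 ∧ 2 ≤ i ∧ i ≤ n - 1) ∧ a = i then 1 else 0)
  + (if (i = 2 ∧ 3 ≤ j ∧ j ≤ n - 2) ∧ a = j + 1 then 1 else 0)
  - (if (j = 2 ∧ 3 ≤ i ∧ i ≤ n - 2) ∧ a = i + 1 then 1 else 0) := by
  unfold cR
  rw [if_congr (show (i = 1 ∧ 2 ≤ j ∧ j ≤ n - 1 ∧ a+1 = j + 1) ↔ ((i = 1 ∧ 2 ≤ j ∧ j ≤ n - 1) ∧ a = j) by omega) rfl rfl, if_congr (show (j = 1 ∧ 2 ≤ i ∧ i ≤ n - 1 ∧ a+1 = i + 1) ↔ ((j = 1 ∧ 2 ≤ i ∧ i ≤ n - 1) ∧ a = i) by omega) rfl rfl,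
      if_congr (show (i = 2 ∧ 3 ≤ j ∧ j ≤ n - 2 ∧ a+1 = j + 2) ↔ ((i = 2 ∧ 3 ≤ j ∧ j ≤ n - 2) ∧ a = j + 1) by omega) rfl rfl,
      if_congr (show (j = 2 ∧ 3 ≤ i ∧ i ≤ n - 2 ∧ a+1 = i + 2) ↔ ((j = 2 ∧ 3 ≤ i ∧ i ≤ n - 2) ∧ a = i + 1) by omega) rfl rfl]

lemma ite_pin (P : Prop) [Decidable P] (t a : ℕ) (f : ℕ → ℂ) :
    (if P ∧ a = t then (1:ℂ) else 0) * f a = if P ∧ a = t then f t else 0 := by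
  split_ifs with h
  · rw [h.2, one_mul]
  · exact zero_mul _

lemma sum_pin (P : Prop) [Decidable P] (n t : ℕ) (x : ℂ) :
    ∑ a ∈ Finset.range n, (if P ∧ a = t then x else 0) = if P ∧ t < n then x else 0 := by
  by_cases hP : P <;> simp [hP, Finset.sum_ite_eq']

lemma contract (n : ℕ) (hn : 5 ≤ n) (i j b k : ℕ) :
    ∑ a ∈ Finset.range n, cR n i j (a+1) * cR n (a+1) b k
  = -(if i = 1 ∧ 2 ≤ j ∧ j ≤ n - 1 then E n (j+1) b k else 0)
    + (if j = 1 ∧ 2 ≤ i ∧ i ≤ n - 1 then E n (i+1) b k else 0)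
    - (if i = 2 ∧ 3 ≤ j ∧ j ≤ n - 2 then E n (j+2) b k else 0)
    + (if j = 2 ∧ 3 ≤ i ∧ i ≤ n - 2 then E n (i+2) b k else 0) := by
  have step : ∀ a ∈ Finset.range n, cR n i j (a+1) * cR n (a+1) b k =
      (if (i = 1 ∧ 2 ≤ j ∧ j ≤ n - 1) ∧ a = j then cR n (j+1) b k else 0)
    - (if (j = 1 ∧ 2 ≤ i ∧ i ≤ n - 1) ∧ a = i then cR n (i+1) b k else 0)
    + (if (i = 2 ∧ 3 ≤ j ∧ j ≤ n - 2) ∧ a = j + 1 then cR n (j+2) b k else 0)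
    - (if (j = 2 ∧ 3 ≤ i ∧ i ≤ n - 2) ∧ a = i + 1 then cR n (i+2) b k else 0) := by
    intro a _
    rw [cR_succ, sub_mul, add_mul, sub_mul,
        ite_pin _ _ _ (fun m => cR n (m+1) b k), ite_pin _ _ _ (fun m => cR n (m+1) b k),
        ite_pin _ _ _ (fun m => cR n (m+1) b k), ite_pin _ _ _ (fun m => cR n (m+1) b k)]
  rw [Finset.sum_congr rfl step]
  rw [Finset.sum_sub_distrib, Finset.sum_add_distrib, Finset.sum_sub_distrib,
      sum_pin, sum_pin, sum_pin, sum_pin]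
  have e1 : (if (i = 1 ∧ 2 ≤ j ∧ j ≤ n - 1) ∧ j < n then cR n (j+1) b k else 0)
      = -(if i = 1 ∧ 2 ≤ j ∧ j ≤ n - 1 then E n (j+1) b k else 0) := by
    rw [if_congr (show ((i = 1 ∧ 2 ≤ j ∧ j ≤ n - 1) ∧ j < n) ↔ (i = 1 ∧ 2 ≤ j ∧ j ≤ n - 1) by omega) rfl rfl]
    split_ifs with h
    · exact cR_big n (j+1) b k (by omega)
    · ring
  have e2 : (if (j = 1 ∧ 2 ≤ i ∧ i ≤ n - 1) ∧ i < n then cR n (i+1) b k else 0)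
      = -(if j = 1 ∧ 2 ≤ i ∧ i ≤ n - 1 then E n (i+1) b k else 0) := by
    rw [if_congr (show ((j = 1 ∧ 2 ≤ i ∧ i ≤ n - 1) ∧ i < n) ↔ (j = 1 ∧ 2 ≤ i ∧ i ≤ n - 1) by omega) rfl rfl]
    split_ifs with h
    · exact cR_big n (i+1) b k (by omega)
    · ring
  have e3 : (if (i = 2 ∧ 3 ≤ j ∧ j ≤ n - 2) ∧ j + 1 < n then cR n (j+1+1) b k else 0)
      = -(if i = 2 ∧ 3 ≤ j ∧ j ≤ n - 2 then E n (j+2) b k else 0) := by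
    rw [if_congr (show ((i = 2 ∧ 3 ≤ j ∧ j ≤ n - 2) ∧ j + 1 < n) ↔ (i = 2 ∧ 3 ≤ j ∧ j ≤ n - 2) by omega) rfl rfl]
    split_ifs with h
    · rw [show j+1+1 = j+2 by omega]; exact cR_big n (j+2) b k (by omega)
    · ring
  have e4 : (if (j = 2 ∧ 3 ≤ i ∧ i ≤ n - 2) ∧ i + 1 < n then cR n (i+1+1) b k else 0)
      = -(if j = 2 ∧ 3 ≤ i ∧ i ≤ n - 2 then E n (i+2) b k else 0) := by
    rw [if_congr (show ((j = 2 ∧ 3 ≤ i ∧ i ≤ n - 2) ∧ i + 1 < n) ↔ (j = 2 ∧ 3 ≤ i ∧ i ≤ n - 2) by omega) rfl rfl]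
    split_ifs with h
    · rw [show i+1+1 = i+2 by omega]; exact cR_big n (i+2) b k (by omega)
    · ring
  rw [e1, e2, e3, e4]; ring

lemma jac (n : ℕ) (hn : 5 ≤ n) (i j b k : ℕ) :
    (∑ a ∈ Finset.range n, cR n i j (a+1) * cR n (a+1) b k)
  + (∑ a ∈ Finset.range n, cR n j b (a+1) * cR n (a+1) i k)
  + (∑ a ∈ Finset.range n, cR n b i (a+1) * cR n (a+1) j k) = 0 := by
  rw [contract n hn i j b k, contract n hn j b i k, contract n hn b i j k]
  rcases eq_or_ne i 1 with hi1 | hi1 <;> rcases eq_or_ne i 2 with hi2 | hi2 <;>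
  rcases eq_or_ne j 1 with hj1 | hj1 <;> rcases eq_or_ne j 2 with hj2 | hj2 <;>
  rcases eq_or_ne b 1 with hb1 | hb1 <;> rcases eq_or_ne b 2 with hb2 | hb2 <;>
  first
  | (exfalso; omega)
  | (norm_num [E, hi1, hi2, hj1, hj2, hb1, hb2] <;>
     split_ifs <;> first | (exfalso; omega) | norm_num)

lemma rot3 {n : ℕ} (F : Fin n → Fin n → Fin n → ℂ) :
    ∑ i : Fin n, ∑ j : Fin n, ∑ b : Fin n, F i j b
    = ∑ b : Fin n, ∑ i : Fin n, ∑ j : Fin n, F i j b := by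
  calc ∑ i : Fin n, ∑ j : Fin n, ∑ b : Fin n, F i j b
      = ∑ i : Fin n, ∑ b : Fin n, ∑ j : Fin n, F i j b :=
        Finset.sum_congr rfl (fun i _ => Finset.sum_comm)
    _ = ∑ b : Fin n, ∑ i : Fin n, ∑ j : Fin n, F i j b := Finset.sum_comm

lemma comm4 {n : ℕ} (F : Fin n → Fin n → Fin n → Fin n → ℂ) :
    (∑ a : Fin n, ∑ b : Fin n, ∑ i : Fin n, ∑ j : Fin n, F a b i j)
    = ∑ i : Fin n, ∑ j : Fin n, ∑ b : Fin n, ∑ a : Fin n, F a b i j := by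
  calc (∑ a : Fin n, ∑ b : Fin n, ∑ i : Fin n, ∑ j : Fin n, F a b i j)
      = ∑ a : Fin n, ∑ i : Fin n, ∑ b : Fin n, ∑ j : Fin n, F a b i j :=
        Finset.sum_congr rfl (fun a _ => Finset.sum_comm)
    _ = ∑ i : Fin n, ∑ a : Fin n, ∑ b : Fin n, ∑ j : Fin n, F a b i j := Finset.sum_comm
    _ = ∑ i : Fin n, ∑ a : Fin n, ∑ j : Fin n, ∑ b : Fin n, F a b i j :=
        Finset.sum_congr rfl (fun i _ => Finset.sum_congr rfl (fun a _ => Finset.sum_comm))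
    _ = ∑ i : Fin n, ∑ j : Fin n, ∑ a : Fin n, ∑ b : Fin n, F a b i j :=
        Finset.sum_congr rfl (fun i _ => Finset.sum_comm)
    _ = ∑ i : Fin n, ∑ j : Fin n, ∑ b : Fin n, ∑ a : Fin n, F a b i j :=
        Finset.sum_congr rfl (fun i _ => Finset.sum_congr rfl (fun j _ => Finset.sum_comm))

lemma expand (n : ℕ) (c : ℕ → ℕ → ℕ → ℂ) (f g h : Fin n → ℂ) (k : Fin n) :
    bilinBracket n c (bilinBracket n c f g) h k
    = ∑ i : Fin n, ∑ j : Fin n, ∑ b : Fin n, (f i * g j * h b *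
        ∑ a : Fin n, c ((i:ℕ)+1) ((j:ℕ)+1) ((a:ℕ)+1) * c ((a:ℕ)+1) ((b:ℕ)+1) ((k:ℕ)+1)) := by
  show (∑ a : Fin n, ∑ b : Fin n,
      (∑ i : Fin n, ∑ j : Fin n, f i * g j * c ((i:ℕ)+1) ((j:ℕ)+1) ((a:ℕ)+1))
      * h b * c ((a:ℕ)+1) ((b:ℕ)+1) ((k:ℕ)+1)) = _
  simp only [Finset.sum_mul]
  rw [comm4 (fun a b i j => f i * g j * c ((i:ℕ)+1) ((j:ℕ)+1) ((a:ℕ)+1)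
      * h b * c ((a:ℕ)+1) ((b:ℕ)+1) ((k:ℕ)+1))]
  refine Finset.sum_congr rfl (fun i _ => Finset.sum_congr rfl (fun j _ =>
    Finset.sum_congr rfl (fun b _ => ?_)))
  rw [Finset.mul_sum]
  exact Finset.sum_congr rfl (fun a _ => by ring)


/-- The `n`-dimensional space with the brackets of `R_n` extended bilinearly is
a Lie algebra: the bracket is antisymmetric and satisfies the Jacobi identity. -/
theorem Rn_is_lie_algebra (n : ℕ) (hn : 5 ≤ n) :
    (∀ f g : Fin n → ℂ,
      bilinBracket n (cR n) f g = - bilinBracket n (cR n) g f) ∧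
    (∀ f g h : Fin n → ℂ,
      bilinBracket n (cR n) (bilinBracket n (cR n) f g) h
      + bilinBracket n (cR n) (bilinBracket n (cR n) g h) f
      + bilinBracket n (cR n) (bilinBracket n (cR n) h f) g = 0) := by
  constructor
  · intro f g
    funext k
    show (∑ i : Fin n, ∑ j : Fin n, f i * g j * cR n ((i:ℕ)+1) ((j:ℕ)+1) ((k:ℕ)+1))
      = -(∑ i : Fin n, ∑ j : Fin n, g i * f j * cR n ((i:ℕ)+1) ((j:ℕ)+1) ((k:ℕ)+1))
    rw [Finset.sum_comm, ← Finset.sum_neg_distrib]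
    refine Finset.sum_congr rfl (fun j _ => ?_)
    rw [← Finset.sum_neg_distrib]
    refine Finset.sum_congr rfl (fun i _ => ?_)
    rw [cR_antisym]
    ring
  · intro f g h
    funext k
    show bilinBracket n (cR n) (bilinBracket n (cR n) f g) h k
      + bilinBracket n (cR n) (bilinBracket n (cR n) g h) f k
      + bilinBracket n (cR n) (bilinBracket n (cR n) h f) g k = 0
    rw [expand, expand, expand]
    rw [rot3 (fun p q r => g p * h q * f r *
        ∑ a : Fin n, cR n ((p:ℕ)+1) ((q:ℕ)+1) ((a:ℕ)+1) * cR n ((a:ℕ)+1) ((r:ℕ)+1) ((k:ℕ)+1))]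
    rw [rot3 (fun p q r => h p * f q * g r *
        ∑ a : Fin n, cR n ((p:ℕ)+1) ((q:ℕ)+1) ((a:ℕ)+1) * cR n ((a:ℕ)+1) ((r:ℕ)+1) ((k:ℕ)+1)),
       rot3 (fun r p q => h p * f q * g r *
        ∑ a : Fin n, cR n ((p:ℕ)+1) ((q:ℕ)+1) ((a:ℕ)+1) * cR n ((a:ℕ)+1) ((r:ℕ)+1) ((k:ℕ)+1))]
    rw [← Finset.sum_add_distrib, ← Finset.sum_add_distrib]
    refine Finset.sum_eq_zero (fun i _ => ?_)
    rw [← Finset.sum_add_distrib, ← Finset.sum_add_distrib]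
    refine Finset.sum_eq_zero (fun j _ => ?_)
    rw [← Finset.sum_add_distrib, ← Finset.sum_add_distrib]
    refine Finset.sum_eq_zero (fun b _ => ?_)
    have key := jac n hn ((i:ℕ)+1) ((j:ℕ)+1) ((b:ℕ)+1) ((k:ℕ)+1)
    have conv : ∀ p q r s : ℕ,
        (∑ a : Fin n, cR n p q ((a:ℕ)+1) * cR n ((a:ℕ)+1) r s)
        = ∑ a ∈ Finset.range n, cR n p q (a+1) * cR n (a+1) r s :=
      fun p q r s => Fin.sum_univ_eq_sum_range (fun a => cR n p q (a+1) * cR n (a+1) r s) n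
    rw [conv, conv, conv]
    calc f i * g j * h b * (∑ a ∈ Finset.range n, cR n ((i:ℕ)+1) ((j:ℕ)+1) (a+1) * cR n (a+1) ((b:ℕ)+1) ((k:ℕ)+1))
        + g j * h b * f i * (∑ a ∈ Finset.range n, cR n ((j:ℕ)+1) ((b:ℕ)+1) (a+1) * cR n (a+1) ((i:ℕ)+1) ((k:ℕ)+1))
        + h b * f i * g j * (∑ a ∈ Finset.range n, cR n ((b:ℕ)+1) ((i:ℕ)+1) (a+1) * cR n (a+1) ((j:ℕ)+1) ((k:ℕ)+1))
        = f i * g j * h b * ((∑ a ∈ Finset.range n, cR n ((i:ℕ)+1) ((j:ℕ)+1) (a+1) * cR n (a+1) ((b:ℕ)+1) ((k:ℕ)+1))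
          + (∑ a ∈ Finset.range n, cR n ((j:ℕ)+1) ((b:ℕ)+1) (a+1) * cR n (a+1) ((i:ℕ)+1) ((k:ℕ)+1))
          + (∑ a ∈ Finset.range n, cR n ((b:ℕ)+1) ((i:ℕ)+1) (a+1) * cR n (a+1) ((j:ℕ)+1) ((k:ℕ)+1))) := by ring
      _ = 0 := by rw [key]; ring
end

section
/- With α_k = 1/(n-k), for all integers i,j ≥ 2 with i+j ≤ n-2 and all 1 ≤ p ≤ n-i-j-1, the identity (∑_{s=0}^{i-2} (-1)^{i+s} C(i-2,s) α_{p+s})·(∑_{r=0}^{j-2} (-1)^{j+r} C(j-2,r) α_{p+i+r}) - (∑_{r=0}^{j-2} (-1)^{j+r} C(j-2,r) α_{p+r})·(∑_{s=0}^{i-2} (-1)^{i+s} C(i-2,s) α_{p+j+s}) + ((i-j)(i-2)!(j-2)!/(i+j-2)!)·∑_{s=0}^{i+j-2} (-1)^{i+j+s} C(i+j-2,s) α_{p+s} = 0 holds. -/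
/-! The alternating binomial sums are iterated backward differences of `x ↦ x⁻¹`, so
`∑_{s ≤ m} (-1)^(m+s) C(m,s) / (z - s) = m! / (z (z-1) ⋯ (z-m))`. With `z = n - p`, the two
products of sums become `(i-2)! (j-2)!` times `z - i + 1`, resp. `z - j + 1`, divided by the same
falling product `z (z-1) ⋯ (z-i-j+2)`, while the last term is `(i-j) (i-2)! (j-2)!` divided by
that product. -/

open Finset
open scoped Nat fwdDiff

variable {K : Type*} [Field K]

theorem fwdDiff_neg_one_iter_inv (m : ℕ) (z : K) (hz : ∀ k ≤ m, z - k ≠ 0) :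
    Δ_[-1] ^[m] (·⁻¹) z = m ! / ∏ k ∈ range (m + 1), (z - k) := by
  induction m generalizing z with
  | zero => simp
  | succ m ih =>
    have hz0 : z ≠ 0 := by simpa using hz 0 (Nat.zero_le _)
    have hzm : z - (m + 1 : ℕ) ≠ 0 := hz (m + 1) le_rfl
    have hz_pred : ∀ k ≤ m, z + -1 - k ≠ 0 := fun k hk => by
      have := hz (k + 1) (by omega)
      rwa [Nat.cast_succ, ← sub_sub, sub_right_comm, sub_eq_add_neg z 1] at this
    have hprod_pred : ∏ k ∈ range (m + 1 + 1), (z - k)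
        = z * ∏ k ∈ range (m + 1), (z + -1 - k) := by
      rw [prod_range_succ', mul_comm, Nat.cast_zero, sub_zero]
      congr 1
      exact prod_congr rfl fun k _ => by push_cast; ring
    rw [Function.iterate_succ_apply', fwdDiff, ih _ hz_pred, ih _ fun k hk => hz k (by omega),
      prod_range_succ _ (m + 1)]
    have hprod : ∏ k ∈ range (m + 1), (z + -1 - k)
        = (∏ k ∈ range (m + 1), (z - k)) * (z - (m + 1 : ℕ)) / z := by
      rw [← prod_range_succ, hprod_pred, mul_div_cancel_left₀ _ hz0]
    rw [hprod]
    field_simp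
    push_cast [Nat.factorial_succ]
    ring

theorem sum_neg_one_pow_mul_choose_div_sub (m : ℕ) (z : K) (hz : ∀ k ≤ m, z - k ≠ 0) :
    ∑ s ∈ range (m + 1), (-1 : K) ^ (m + s) * m.choose s * (1 / (z - s))
      = m ! / ∏ k ∈ range (m + 1), (z - k) := by
  rw [← fwdDiff_neg_one_iter_inv m z hz, fwdDiff_iter_eq_sum_shift]
  refine sum_congr rfl fun s hs => ?_
  have hsign : (-1 : K) ^ (m + s) = (-1) ^ (m - s) := by
    have hsm : s ≤ m := Nat.lt_succ_iff.mp (mem_range.mp hs)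
    rw [show m + s = m - s + 2 * s by omega, pow_add, pow_mul, neg_one_sq, one_pow, mul_one]
  rw [zsmul_eq_mul, nsmul_eq_mul, hsign]
  push_cast
  ring

theorem prod_range_add_sub_natCast (z : K) (a b : ℕ) :
    ∏ k ∈ range (a + b), (z - k) = (∏ k ∈ range a, (z - k)) * ∏ k ∈ range b, (z - a - k) := by
  rw [prod_range_add]
  congr 1
  refine prod_congr rfl fun k _ => ?_
  push_cast
  ring

section CharZero

variable [CharZero K]

theorem natCast_sub_natCast_sub_natCast_ne_zero {n q k : ℕ} (h : q + k < n) :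
    (n : K) - q - k ≠ 0 := by
  rw [sub_sub, ← Nat.cast_add, sub_ne_zero]
  exact_mod_cast h.ne'

theorem alpha_sum_eq_factorial_div_prod (n q i : ℕ) (hi : 2 ≤ i) (hq : q + i ≤ n + 1) :
    ∑ s ∈ range (i - 1),
        (-1 : K) ^ (i + s) * ((i - 2).choose s : K) * (1 / ((n : K) - (q + s : ℕ)))
      = (i - 2)! / ∏ k ∈ range (i - 1), ((n : K) - q - k) := by
  obtain ⟨m, rfl⟩ := Nat.exists_eq_add_of_le' hi
  rw [show m + 2 - 1 = m + 1 by omega, Nat.add_sub_cancel, ← sum_neg_one_pow_mul_choose_div_sub m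
    _ fun k hk => natCast_sub_natCast_sub_natCast_ne_zero (by omega)]
  refine sum_congr rfl fun s _ => ?_
  push_cast
  ring

theorem witt_identity_factorial_div_prod (z : K) (i j : ℕ) (hi : 2 ≤ i) (hj : 2 ≤ j)
    (hzi : z - (i - 1 : ℕ) ≠ 0) (hzj : z - (j - 1 : ℕ) ≠ 0) :
    (i - 2)! / (∏ k ∈ range (i - 1), (z - k)) * ((j - 2)! / ∏ k ∈ range (j - 1), (z - i - k))
      - (j - 2)! / (∏ k ∈ range (j - 1), (z - k)) * ((i - 2)! / ∏ k ∈ range (i - 1), (z - j - k))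
      + ((i : K) - j) * (i - 2)! * (j - 2)! / (i + j - 2)!
        * ((i + j - 2)! / ∏ k ∈ range (i + j - 1), (z - k)) = 0 := by
  obtain ⟨a, rfl⟩ := Nat.exists_eq_add_of_le' hi
  obtain ⟨b, rfl⟩ := Nat.exists_eq_add_of_le' hj
  rw [show a + 2 - 1 = a + 1 by omega] at hzi ⊢
  rw [show b + 2 - 1 = b + 1 by omega] at hzj ⊢
  rw [show a + 2 + (b + 2) - 1 = a + 2 + (b + 1) by omega, Nat.add_sub_cancel,
    show a + 2 + (b + 2) - 2 = a + b + 2 by omega, Nat.add_sub_cancel]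
  have hsplit_i : ∏ k ∈ range (a + 2 + (b + 1)), (z - k) = (∏ k ∈ range (a + 1), (z - k))
      * (z - (a + 1 : ℕ)) * ∏ k ∈ range (b + 1), (z - (a + 2 : ℕ) - k) := by
    rw [prod_range_add_sub_natCast z (a + 2) (b + 1), prod_range_succ _ (a + 1)]
  have hsplit_j : ∏ k ∈ range (a + 2 + (b + 1)), (z - k) = (∏ k ∈ range (b + 1), (z - k))
      * (z - (b + 1 : ℕ)) * ∏ k ∈ range (a + 1), (z - (b + 2 : ℕ) - k) := by
    rw [show a + 2 + (b + 1) = b + 2 + (a + 1) by omega,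
      prod_range_add_sub_natCast z (b + 2) (a + 1), prod_range_succ _ (b + 1)]
  have hterm_i : (a ! : K) / (∏ k ∈ range (a + 1), (z - k))
      * (b ! / ∏ k ∈ range (b + 1), (z - (a + 2 : ℕ) - k))
      = a ! * b ! * (z - (a + 1 : ℕ)) / ∏ k ∈ range (a + 2 + (b + 1)), (z - k) := by
    rw [div_mul_div_comm, hsplit_i, mul_right_comm _ (z - _), mul_div_mul_right _ _ hzi]
  have hterm_j : (b ! : K) / (∏ k ∈ range (b + 1), (z - k))
      * (a ! / ∏ k ∈ range (a + 1), (z - (b + 2 : ℕ) - k))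
      = a ! * b ! * (z - (b + 1 : ℕ)) / ∏ k ∈ range (a + 2 + (b + 1)), (z - k) := by
    rw [div_mul_div_comm, hsplit_j, mul_right_comm _ (z - _), mul_div_mul_right _ _ hzj,
      mul_comm (b ! : K)]
  have hfact : ((a + b + 2)! : K) ≠ 0 := Nat.cast_ne_zero.mpr (Nat.factorial_ne_zero _)
  rw [hterm_i, hterm_j, div_mul_div_cancel₀ hfact, ← sub_div, ← add_div, div_eq_zero_iff]
  left
  push_cast
  ring

end CharZero

theorem witt_structure_constant_identity_general (n i j p : ℕ)
    (hi : 2 ≤ i) (hj : 2 ≤ j) (hij : i + j ≤ n - 2)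
    (hp2 : p ≤ n - i - j - 1) :
    (∑ s ∈ Finset.range (i - 1),
        (-1 : ℂ) ^ (i + s) * ((i - 2).choose s : ℂ) * (1 / ((n : ℂ) - (p + s : ℕ))))
      * (∑ r ∈ Finset.range (j - 1),
        (-1 : ℂ) ^ (j + r) * ((j - 2).choose r : ℂ) * (1 / ((n : ℂ) - (p + i + r : ℕ))))
    - (∑ r ∈ Finset.range (j - 1),
        (-1 : ℂ) ^ (j + r) * ((j - 2).choose r : ℂ) * (1 / ((n : ℂ) - (p + r : ℕ))))
      * (∑ s ∈ Finset.range (i - 1),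
        (-1 : ℂ) ^ (i + s) * ((i - 2).choose s : ℂ) * (1 / ((n : ℂ) - (p + j + s : ℕ))))
    + (((i : ℂ) - (j : ℂ)) * ((i - 2).factorial : ℂ) * ((j - 2).factorial : ℂ)
          / ((i + j - 2).factorial : ℂ))
      * (∑ s ∈ Finset.range (i + j - 1),
        (-1 : ℂ) ^ (i + j + s) * ((i + j - 2).choose s : ℂ)
          * (1 / ((n : ℂ) - (p + s : ℕ)))) = 0 := by
  have hn : p + i + j + 1 ≤ n := by omega
  rw [alpha_sum_eq_factorial_div_prod n p i hi (by omega),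
    alpha_sum_eq_factorial_div_prod n (p + i) j hj (by omega),
    alpha_sum_eq_factorial_div_prod n p j hj (by omega),
    alpha_sum_eq_factorial_div_prod n (p + j) i hi (by omega),
    alpha_sum_eq_factorial_div_prod n p (i + j) (by omega) (by omega)]
  simp only [Nat.cast_add, ← sub_sub]
  exact witt_identity_factorial_div_prod _ i j hi hj
    (natCast_sub_natCast_sub_natCast_ne_zero (by omega))
    (natCast_sub_natCast_sub_natCast_ne_zero (by omega))

/-- With `α_k = 1/(n-k)`, the compatibility identity for the structure
constants of the minimal representation of the truncated Witt algebra: for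
`i, j ≥ 2` with `i + j ≤ n - 2` and `1 ≤ p ≤ n - i - j - 1`,
`(∑_{s=0}^{i-2} (-1)^{i+s} C(i-2,s) α_{p+s})(∑_{r=0}^{j-2} (-1)^{j+r} C(j-2,r) α_{p+i+r})`
`- (∑_{r=0}^{j-2} (-1)^{j+r} C(j-2,r) α_{p+r})(∑_{s=0}^{i-2} (-1)^{i+s} C(i-2,s) α_{p+j+s})`
`+ ((i-j)(i-2)!(j-2)!/(i+j-2)!) ∑_{s=0}^{i+j-2} (-1)^{i+j+s} C(i+j-2,s) α_{p+s} = 0`. -/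
theorem witt_structure_constant_identity (n i j p : ℕ)
    (hi : 2 ≤ i) (hj : 2 ≤ j) (hij : i + j ≤ n - 2)
    (hp1 : 1 ≤ p) (hp2 : p ≤ n - i - j - 1) :
    (∑ s ∈ Finset.range (i - 1),
        (-1 : ℂ) ^ (i + s) * ((i - 2).choose s : ℂ) * (1 / ((n : ℂ) - (p + s : ℕ))))
      * (∑ r ∈ Finset.range (j - 1),
        (-1 : ℂ) ^ (j + r) * ((j - 2).choose r : ℂ) * (1 / ((n : ℂ) - (p + i + r : ℕ))))
    - (∑ r ∈ Finset.range (j - 1),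
        (-1 : ℂ) ^ (j + r) * ((j - 2).choose r : ℂ) * (1 / ((n : ℂ) - (p + r : ℕ))))
      * (∑ s ∈ Finset.range (i - 1),
        (-1 : ℂ) ^ (i + s) * ((i - 2).choose s : ℂ) * (1 / ((n : ℂ) - (p + j + s : ℕ))))
    + (((i : ℂ) - (j : ℂ)) * ((i - 2).factorial : ℂ) * ((j - 2).factorial : ℂ)
          / ((i + j - 2).factorial : ℂ))
      * (∑ s ∈ Finset.range (i + j - 1),
        (-1 : ℂ) ^ (i + j + s) * ((i + j - 2).choose s : ℂ)
          * (1 / ((n : ℂ) - (p + s : ℕ)))) = 0 :=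
  witt_structure_constant_identity_general n i j p hi hj hij hp2
end

section
/- The linear map φ from the truncated Witt algebra W_n to gl(n,ℂ) defined by φ(e_1) = ∑_{k=1}^{n-2} E_{k,k+1}, φ(e_2) = ∑_{k=1}^{n-3} (1/(n-k)) E_{k,k+2} + E_{n-1,n}, and φ(e_i) = (1/(i-2)!)·(∑_{k=1}^{n-i-1} (∑_{s=0}^{i-2} (-1)^{i+s} C(i-2,s)/(n-k-s)) E_{k,k+i} + E_{n+1-i,n}) for 3 ≤ i ≤ n, is an injective Lie algebra homomorphism. -/
/-- Structure constants of the truncated Witt algebra `W_n`: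
`[e_i,e_j] = (j-i) e_{i+j}` when `i+j ≤ n`, and `0` otherwise. -/
noncomputable def cW (n i j k : ℕ) : ℂ :=
  if i + j ≤ n ∧ k = i + j then (j : ℂ) - (i : ℂ) else 0
/-- The matrices representing the basis of the truncated Witt algebra `W_n`:
`φ(e_1) = ∑_{k=1}^{n-2} E_{k,k+1}`,
`φ(e_2) = ∑_{k=1}^{n-3} (1/(n-k)) E_{k,k+2} + E_{n-1,n}`,
`φ(e_i) = (1/(i-2)!) (∑_{k=1}^{n-i-1} (∑_{s=0}^{i-2} (-1)^{i+s} C(i-2,s)/(n-k-s)) E_{k,k+i}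
          + E_{n+1-i,n})` for `3 ≤ i ≤ n`. -/
noncomputable def MW (n i : ℕ) : Matrix (Fin n) (Fin n) ℂ :=
  if i = 1 then ∑ k ∈ Finset.Icc 1 (n - 2), elemMat n k (k + 1)
  else if i = 2 then
    (∑ k ∈ Finset.Icc 1 (n - 3), ((1 : ℂ) / ((n : ℂ) - (k : ℂ))) • elemMat n k (k + 2))
      + elemMat n (n - 1) n
  else ((1 : ℂ) / ((i - 2).factorial : ℂ)) •
    ((∑ k ∈ Finset.Icc 1 (n - i - 1),
        (∑ s ∈ Finset.range (i - 1),
          (-1 : ℂ) ^ (i + s) * ((i - 2).choose s : ℂ) / ((n : ℂ) - (k : ℂ) - (s : ℂ)))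
          • elemMat n k (k + i))
      + elemMat n (n + 1 - i) n)

/-!
In 0-based coordinates, `φ(e_i)` has the entry `1 / (x (x - 1) ⋯ (x - i + 2))`, `x = n - a - 1`,
at `(a, a + i)` for `a + i ≤ n - 2`, and the entry `1 / (i - 2)!` at `(n - i, n - 1)`: the
alternating binomial sums of the paper are `(i - 2)`-fold differences of `1 / x` with step `-1`,
hence reciprocals of descending Pochhammer symbols. Each row of `φ(e_i) φ(e_j)` then has a single
nonzero entry, and the bracket relation reduces to the factorisation
`x (x - 1) ⋯ (x - i - j + 2) = [x ⋯ (x - i + 2)] (x - i + 1) [(x - i) ⋯ (x - i - j + 2)]`.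
Injectivity holds because every `φ(e_i)` has an entry at which all the others vanish: `(0, 1)`
for `i = 1` and `(n - i, n - 1)` for `i ≥ 2`.
-/

open Finset Polynomial
open scoped Nat

section Pochhammer

variable {K : Type*} [Field K]

theorem fwdDiff_neg_one_iter_inv_s11 (m : ℕ) (x : K) (hx : (descPochhammer K (m + 1)).eval x ≠ 0) :
    (fwdDiff (-1))^[m] (fun y : K => y⁻¹) x = m ! * ((descPochhammer K (m + 1)).eval x)⁻¹ := by
  induction m generalizing x with
  | zero => simp
  | succ m ih =>
    have hright : (descPochhammer K (m + 2)).eval x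
        = (descPochhammer K (m + 1)).eval x * (x - (m + 1 : ℕ)) := descPochhammer_succ_eval _ x
    have hleft : (descPochhammer K (m + 2)).eval x
        = x * (descPochhammer K (m + 1)).eval (x - 1) := by
      simp [descPochhammer_succ_left (R := K) (m + 1)]
    obtain ⟨hPx, hxm⟩ := mul_ne_zero_iff.1 (hright ▸ hx)
    obtain ⟨hx0, hPx'⟩ := mul_ne_zero_iff.1 (hleft ▸ hx)
    have e1 : ((descPochhammer K (m + 1)).eval (x - 1))⁻¹
        = x * ((descPochhammer K (m + 2)).eval x)⁻¹ := by
      rw [hleft, mul_inv, mul_inv_cancel_left₀ hx0]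
    have e2 : ((descPochhammer K (m + 1)).eval x)⁻¹
        = (x - (m + 1 : ℕ)) * ((descPochhammer K (m + 2)).eval x)⁻¹ := by
      rw [hright, mul_inv, mul_comm, mul_assoc, inv_mul_cancel₀ hxm, mul_one]
    rw [Function.iterate_succ_apply', fwdDiff, ← sub_eq_add_neg, ih x hPx, ih (x - 1) hPx', e1, e2,
      Nat.factorial_succ]
    push_cast
    ring

theorem descPochhammer_eval_inv_mul_inv (p q : ℕ) (x : K) (hx : x ≠ p) :
    ((descPochhammer K p).eval x)⁻¹ * ((descPochhammer K q).eval (x - (p + 1)))⁻¹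
      = (x - p) * ((descPochhammer K (p + q + 1)).eval x)⁻¹ := by
  have h := congrArg (eval x) (descPochhammer_mul (R := K) (p + 1) q)
  rw [eval_mul, eval_comp, descPochhammer_succ_eval, add_right_comm] at h
  simp only [eval_sub, eval_X, eval_natCast, Nat.cast_add, Nat.cast_one, eval_add, eval_one] at h
  rw [← h, mul_inv, mul_inv, mul_right_comm, mul_comm (x - p), mul_assoc,
    inv_mul_cancel₀ (sub_ne_zero.2 hx), mul_one]

theorem sum_range_neg_one_pow_mul_choose_div_sub (m : ℕ) (x : K)
    (hx : (descPochhammer K (m + 1)).eval x ≠ 0) :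
    ∑ s ∈ range (m + 1), (-1) ^ (m + s) * (m.choose s : K) / (x - s)
      = m ! * ((descPochhammer K (m + 1)).eval x)⁻¹ := by
  rw [← fwdDiff_neg_one_iter_inv_s11 m x hx, fwdDiff_iter_eq_sum_shift]
  refine Finset.sum_congr rfl fun s hs => ?_
  have : (-1 : K) ^ (m + s) = (-1) ^ (m - s) := by
    have := mem_range.1 hs
    rw [show m + s = m - s + 2 * s by omega, pow_add, pow_mul]; simp
  simp [this, zsmul_eq_mul, div_eq_mul_inv, sub_eq_add_neg]

theorem descPochhammer_eval_natCast_ne_zero [CharZero K] {k M : ℕ} (h : k ≤ M) :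
    (descPochhammer K k).eval (M : K) ≠ 0 := by
  rw [descPochhammer_eval_eq_descFactorial]
  exact_mod_cast (Nat.descFactorial_eq_zero_iff_lt.not.2 (by omega))

end Pochhammer

theorem linearIndependent_of_isolated_entries {ι m m' K : Type*} [Field K]
    (v : ι → Matrix m m' K) (r : ι → m) (c : ι → m')
    (hne : ∀ x, v x (r x) (c x) ≠ 0) (hzero : ∀ x y, x ≠ y → v y (r x) (c x) = 0) :
    LinearIndependent K v :=
  LinearIndependent.of_pairwise_dual_eq_zero_one v
    (fun x => (v x (r x) (c x))⁻¹ • Matrix.entryLinearMap K K (r x) (c x))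
    (fun x y hxy => by simp [hzero x y hxy]) (fun x => by simp [hne x])

noncomputable def wittCoeff (i : ℕ) (x : ℂ) : ℂ := ((descPochhammer ℂ (i - 1)).eval x)⁻¹

lemma wittCoeff_mul_wittCoeff_sub {i j : ℕ} (hi : 1 ≤ i) (hj : 1 ≤ j) {x : ℂ} (hx : x ≠ i - 1) :
    wittCoeff i x * wittCoeff j (x - i) = (x - i + 1) * wittCoeff (i + j) x := by
  obtain ⟨p, rfl⟩ := Nat.exists_eq_add_of_le' hi
  obtain ⟨q, rfl⟩ := Nat.exists_eq_add_of_le' hj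
  have := descPochhammer_eval_inv_mul_inv p q x (by push_cast at hx; simpa using hx)
  simp only [wittCoeff, Nat.add_sub_cancel, show p + 1 + (q + 1) - 1 = p + q + 1 by omega]
  push_cast
  linear_combination this

lemma wittCoeff_bracket {i j : ℕ} (hi : 1 ≤ i) (hj : 1 ≤ j) {x : ℂ} (hxi : x ≠ i - 1)
    (hxj : x ≠ j - 1) :
    wittCoeff i x * wittCoeff j (x - i) - wittCoeff j x * wittCoeff i (x - j)
      = (j - i) * wittCoeff (i + j) x := by
  rw [wittCoeff_mul_wittCoeff_sub hi hj hxi, wittCoeff_mul_wittCoeff_sub hj hi hxj, add_comm j i]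
  ring

lemma wittCoeff_bracket_corner {i j : ℕ} (hi : 1 ≤ i) (hj : 1 ≤ j) :
    wittCoeff i (i + j - 1) * ((j - 1) * wittCoeff j (j - 1))
      - wittCoeff j (i + j - 1) * ((i - 1) * wittCoeff i (i - 1))
      = (j - i) * ((i + j - 1) * wittCoeff (i + j) (i + j - 1)) := by
  have hi0 : (i : ℂ) ≠ 0 := by exact_mod_cast (by omega : i ≠ 0)
  have hj0 : (j : ℂ) ≠ 0 := by exact_mod_cast (by omega : j ≠ 0)
  have h1 := wittCoeff_mul_wittCoeff_sub hi hj (x := i + j - 1)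
    (fun h => hj0 (by linear_combination h))
  have h2 := wittCoeff_mul_wittCoeff_sub hj hi (x := i + j - 1)
    (fun h => hi0 (by linear_combination h))
  rw [show (i : ℂ) + j - 1 - i = j - 1 by ring] at h1
  rw [show (i : ℂ) + j - 1 - j = i - 1 by ring, add_comm j i] at h2
  linear_combination (j - 1 : ℂ) * h1 - (i - 1 : ℂ) * h2

lemma sub_one_mul_wittCoeff_sub_one {i : ℕ} (hi : 2 ≤ i) :
    ((i : ℂ) - 1) * wittCoeff i (i - 1) = ((i - 2)! : ℂ)⁻¹ := by
  obtain ⟨m, rfl⟩ := Nat.exists_eq_add_of_le' hi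
  have hcast : ((m + 2 : ℕ) : ℂ) - 1 = ((m + 1 : ℕ) : ℂ) := by push_cast; ring
  rw [hcast, wittCoeff, show m + 2 - 1 = m + 1 by omega, descPochhammer_eval_eq_descFactorial,
    Nat.descFactorial_self, Nat.factorial_succ, Nat.add_sub_cancel]
  push_cast
  field_simp

lemma inv_factorial_mul_sum_eq_wittCoeff {i : ℕ} (hi : 2 ≤ i) {x : ℂ}
    (hx : (descPochhammer ℂ (i - 1)).eval x ≠ 0) :
    ((i - 2)! : ℂ)⁻¹ * ∑ s ∈ range (i - 1), (-1) ^ (i + s) * ((i - 2).choose s : ℂ) / (x - s)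
      = wittCoeff i x := by
  obtain ⟨m, rfl⟩ := Nat.exists_eq_add_of_le' hi
  simp only [wittCoeff, show m + 2 - 1 = m + 1 by omega, Nat.add_sub_cancel] at hx ⊢
  have hsign : ∀ s, (-1 : ℂ) ^ (m + 2 + s) = (-1) ^ (m + s) := fun s => by
    rw [add_right_comm, pow_add _ (m + s)]; simp
  rw [sum_congr rfl fun s _ => by rw [hsign], sum_range_neg_one_pow_mul_choose_div_sub m x hx,
    ← mul_assoc, inv_mul_cancel₀ (Nat.cast_ne_zero.2 m.factorial_ne_zero), one_mul]

/-- The entries of `MW n i` in 0-based indices (see `MW_apply`). They are defined for all natural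
indices so that `MW_mul_apply` can refer to row `a + i` even when it is out of range. The
last-column entry `(i - 1) * wittCoeff i (i - 1) = 1 / (i - 2)!` is written so that it vanishes
at `i = 1` and `wittCoeff_mul_wittCoeff_sub` applies to it. -/
noncomputable def wittEntry (n i a b : ℕ) : ℂ :=
  if b + 1 < n then (if b = a + i then wittCoeff i (n - a - 1) else 0)
  else if a + i = n then (i - 1) * wittCoeff i (i - 1) else 0

lemma natCast_sub_sub_one_ne_sub_one {n a i : ℕ} (h : a + i < n) : (n : ℂ) - a - 1 ≠ i - 1 := by
  intro h'
  have : ((a + i : ℕ) : ℂ) = n := by push_cast; linear_combination -h'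
  exact absurd (Nat.cast_injective this) (by omega)

lemma wittEntry_bracket {n i j : ℕ} (hi : 1 ≤ i) (hj : 1 ≤ j) (a b : ℕ) :
    wittCoeff i (n - a - 1) * wittEntry n j (a + i) b
        - wittCoeff j (n - a - 1) * wittEntry n i (a + j) b
      = (j - i) * wittEntry n (i + j) a b := by
  have hxi : (n : ℂ) - (a + i : ℕ) - 1 = n - a - 1 - i := by push_cast; ring
  have hxj : (n : ℂ) - (a + j : ℕ) - 1 = n - a - 1 - j := by push_cast; ring
  simp only [wittEntry, hxi, hxj]
  by_cases hb : b + 1 < n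
  · simp only [hb, if_true]
    by_cases hab : b = a + i + j
    · rw [if_pos (by omega), if_pos (by omega), if_pos (by omega)]
      exact wittCoeff_bracket hi hj (natCast_sub_sub_one_ne_sub_one (by omega))
        (natCast_sub_sub_one_ne_sub_one (by omega))
    · rw [if_neg (by omega), if_neg (by omega), if_neg (by omega)]; ring
  · simp only [hb, if_false]
    by_cases ha : a + i + j = n
    · rw [if_pos (by omega), if_pos (by omega), if_pos (by omega)]
      have hx : (n : ℂ) - a - 1 = i + j - 1 := by rw [← ha]; push_cast; ring
      rw [hx]; push_cast
      exact wittCoeff_bracket_corner hi hj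
    · rw [if_neg (by omega), if_neg (by omega), if_neg (by omega)]; ring

lemma sum_smul_elemMat_apply (n i : ℕ) (s : Finset ℕ) (c : ℕ → ℂ) (a b : Fin n) :
    (∑ k ∈ s, c k • elemMat n k (k + i)) a b
      = if (a : ℕ) + 1 ∈ s ∧ (b : ℕ) = a + i then c (a + 1) else 0 := by
  have hcond : ∀ k, ((a : ℕ) + 1 = k ∧ (b : ℕ) + 1 = k + i) ↔ (k = a + 1 ∧ (b : ℕ) = a + i) :=
    fun k => by omega
  simp only [Matrix.sum_apply, Matrix.smul_apply, elemMat, Matrix.of_apply, smul_eq_mul, mul_ite,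
    mul_one, mul_zero]
  simp only [hcond, ite_and, Finset.sum_ite_eq']

lemma elemMat_band_add_corner_apply {n i : ℕ} (c : ℕ → ℂ) (d : ℂ) (a b : Fin n) :
    (∑ k ∈ Icc 1 (n - i - 1), c k • elemMat n k (k + i) + d • elemMat n (n + 1 - i) n) a b
      = if (b : ℕ) + 1 < n then (if (b : ℕ) = a + i then c (a + 1) else 0)
        else if (a : ℕ) + i = n then d else 0 := by
  rw [Matrix.add_apply, sum_smul_elemMat_apply, Matrix.smul_apply, elemMat, Matrix.of_apply]
  simp only [Finset.mem_Icc]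
  have := a.isLt
  split_ifs <;> first | omega | simp

lemma MW_apply {n i : ℕ} (hi : 1 ≤ i) (a b : Fin n) : MW n i a b = wittEntry n i a b := by
  rcases (show i = 1 ∨ i = 2 ∨ 3 ≤ i by omega) with rfl | rfl | hi3
  · have hMW : MW n 1 = ∑ k ∈ Icc 1 (n - 1 - 1), (fun _ => (1 : ℂ)) k • elemMat n k (k + 1)
        + (0 : ℂ) • elemMat n (n + 1 - 1) n := by
      simp [MW, show n - 1 - 1 = n - 2 by omega]
    rw [hMW, elemMat_band_add_corner_apply]
    simp [wittEntry, wittCoeff]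
  · have hMW : MW n 2 = ∑ k ∈ Icc 1 (n - 2 - 1),
          (fun k : ℕ => 1 / ((n : ℂ) - k)) k • elemMat n k (k + 2)
        + (1 : ℂ) • elemMat n (n + 1 - 2) n := by
      simp [MW, show n - 2 - 1 = n - 3 by omega, show n + 1 - 2 = n - 1 by omega]
    rw [hMW, elemMat_band_add_corner_apply]
    norm_num [wittEntry, wittCoeff, sub_sub]
  · have hMW : MW n i = ∑ k ∈ Icc 1 (n - i - 1), (fun k : ℕ => ((i - 2)! : ℂ)⁻¹ *
          ∑ s ∈ range (i - 1), (-1) ^ (i + s) * ((i - 2).choose s : ℂ) / ((n : ℂ) - k - s)) k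
            • elemMat n k (k + i)
        + ((i - 2)! : ℂ)⁻¹ • elemMat n (n + 1 - i) n := by
      simp only [MW, if_neg (show i ≠ 1 by omega), if_neg (show i ≠ 2 by omega), smul_add,
        Finset.smul_sum, smul_smul, one_div]
    rw [hMW, elemMat_band_add_corner_apply, wittEntry, sub_one_mul_wittCoeff_sub_one (by omega)]
    have hx : (n : ℂ) - ((a + 1 : ℕ) : ℂ) = n - a - 1 := by push_cast; ring
    have hx' : (n : ℂ) - a - 1 = ((n - a - 1 : ℕ) : ℂ) := by
      rw [Nat.sub_sub, Nat.cast_sub (by omega)]; push_cast; ring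
    split_ifs
    · rw [hx, inv_factorial_mul_sum_eq_wittCoeff (by omega)]
      rw [hx']
      exact descPochhammer_eval_natCast_ne_zero (by omega)
    all_goals rfl

lemma wittEntry_eq_zero_of_le {n i a b : ℕ} (hi : 1 ≤ i) (hb : b < n) (ha : n ≤ a + 1) :
    wittEntry n i a b = 0 := by
  unfold wittEntry
  split_ifs
  · omega
  · rfl
  · obtain rfl : i = 1 := by omega
    simp
  · rfl

lemma wittEntry_eq_zero_of_lt {n i a b : ℕ} (hb : b < n) (hi : n < i) :
    wittEntry n i a b = 0 := by
  unfold wittEntry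
  split_ifs <;> first | omega | rfl

lemma MW_mul_apply {n i j : ℕ} (hi : 1 ≤ i) (hj : 1 ≤ j) (a b : Fin n) :
    (MW n i * MW n j) a b = wittCoeff i (n - a - 1) * wittEntry n j (a + i) b := by
  have hterm : ∀ m : ℕ, wittEntry n i a m * wittEntry n j m b
      = if m = a + i then wittCoeff i (n - a - 1) * wittEntry n j m b else 0 := by
    intro m
    by_cases hm : m + 1 < n
    · simp only [wittEntry, hm, if_true, ite_mul, zero_mul]
    · rw [wittEntry_eq_zero_of_le hj b.isLt (by omega)]; simp
  simp only [Matrix.mul_apply, MW_apply hi, MW_apply hj, hterm]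
  rw [Fin.sum_univ_eq_sum_range
    (fun m => if m = a + i then wittCoeff i (n - a - 1) * wittEntry n j m b else 0),
    Finset.sum_ite_eq']
  split_ifs with h
  · rfl
  · rw [wittEntry_eq_zero_of_le hj b.isLt (by simp at h; omega), mul_zero]

lemma MW_bracket {n i j : ℕ} (hi : 1 ≤ i) (hj : 1 ≤ j) :
    MW n i * MW n j - MW n j * MW n i = ((j : ℂ) - i) • MW n (i + j) := by
  ext a b
  rw [Matrix.sub_apply, MW_mul_apply hi hj, MW_mul_apply hj hi, Matrix.smul_apply,
    MW_apply (by omega), smul_eq_mul]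
  exact wittEntry_bracket hi hj a b

lemma MW_eq_zero_of_lt {n i : ℕ} (hi : n < i) : MW n i = 0 := by
  ext a b
  rw [MW_apply (by omega), wittEntry_eq_zero_of_lt b.isLt hi, Matrix.zero_apply]

lemma sum_cW_smul {M : Type*} [AddCommGroup M] [Module ℂ M] (n i j : ℕ) (v : ℕ → M) :
    ∑ k ∈ Icc 1 n, cW n i j k • v k = if i + j ≤ n then ((j : ℂ) - i) • v (i + j) else 0 := by
  by_cases h : i + j ≤ n
  · simp only [cW, h, true_and, and_true, if_true, ite_smul, zero_smul, Finset.sum_ite_eq',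
      Finset.mem_Icc]
    split_ifs with hmem
    · rfl
    · obtain ⟨rfl, rfl⟩ : i = 0 ∧ j = 0 := by omega
      simp
  · simp [cW, h]

lemma wittEntry_zero_one {n i : ℕ} (hn : 3 ≤ n) :
    wittEntry n i 0 1 = if i = 1 then 1 else 0 := by
  rcases eq_or_ne i 1 with rfl | hi
  · simp [wittEntry, wittCoeff, show 1 + 1 < n by omega]
  · simp [wittEntry, show 1 + 1 < n by omega, hi, eq_comm]

lemma wittEntry_last_column {n x y : ℕ} (hx : 1 ≤ x) (hxn : x < n) :
    wittEntry n (y + 1) (n - 1 - x) (n - 1) = if y = x then ((x - 1)! : ℂ)⁻¹ else 0 := by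
  rw [wittEntry, if_neg (by omega)]
  by_cases hy : y = x
  · subst hy
    rw [if_pos (by omega), if_pos rfl, sub_one_mul_wittCoeff_sub_one (by omega)]
    rfl
  · rw [if_neg (by omega), if_neg hy]

lemma MW_linearIndependent {n : ℕ} (hn : 3 ≤ n) :
    LinearIndependent ℂ (fun x : Fin n => MW n (x + 1)) := by
  let r : Fin n → Fin n := fun x => if (x : ℕ) = 0 then ⟨0, by omega⟩ else ⟨n - 1 - x, by omega⟩
  let c : Fin n → Fin n := fun x => if (x : ℕ) = 0 then ⟨1, by omega⟩ else ⟨n - 1, by omega⟩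
  have hentry : ∀ x y : Fin n, MW n (y + 1) (r x) (c x)
      = if (y : ℕ) = x then (if (x : ℕ) = 0 then 1 else ((x - 1 : ℕ)! : ℂ)⁻¹) else 0 := by
    intro x y
    rw [MW_apply (by omega)]
    by_cases hx : (x : ℕ) = 0
    · simp only [r, c, hx, if_true, wittEntry_zero_one hn]
      simp
    · simp only [r, c, hx, if_false, wittEntry_last_column (Nat.one_le_iff_ne_zero.2 hx) x.isLt]
  refine linearIndependent_of_isolated_entries _ r c (fun x => ?_) (fun x y hxy => ?_)
  · rw [hentry, if_pos rfl]
    split_ifs <;> simp [Nat.factorial_ne_zero]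
  · rw [hentry, if_neg (fun h => hxy (Fin.ext h).symm)]

/-- The map `φ` sending `e_i` to `MW n i`, extended linearly, is an injective
Lie algebra homomorphism from the truncated Witt algebra `W_n` to `gl(n,ℂ)`. -/
theorem Wn_minimal_representation (n : ℕ) (hn : 5 ≤ n) :
    (∀ i ∈ Finset.Icc 1 n, ∀ j ∈ Finset.Icc 1 n,
      ∑ k ∈ Finset.Icc 1 n, cW n i j k • MW n k
        = MW n i * MW n j - MW n j * MW n i) ∧
    Function.Injective
      (fun f : Fin n → ℂ => ∑ i : Fin n, f i • MW n ((i : ℕ) + 1)) := by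
  refine ⟨fun i hi j hj => ?_, ?_⟩
  · rw [Finset.mem_Icc] at hi hj
    rw [sum_cW_smul, MW_bracket hi.1 hj.1]
    split_ifs with h
    · rfl
    · rw [MW_eq_zero_of_lt (by omega), smul_zero]
  · exact (MW_linearIndependent (by omega)).fintypeLinearCombination_injective
end

section
/- The algebra Q_{2n} is filiform: with the given brackets, the terms of the lower central series satisfy dim Q_{2n}^i = 2n - i for 2 ≤ i ≤ 2n, where Q_{2n}^1 = Q_{2n} and Q_{2n}^{k+1} = [Q_{2n}, Q_{2n}^k]. -/
/-- The lower central series of the bracket algebra on `Fin N → ℂ`: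
`lcs 0 = L¹ = L` and `lcs k = L^{k+1} = [L, L^k]`. -/
noncomputable def lcs (N : ℕ) (c : ℕ → ℕ → ℕ → ℂ) : ℕ → Submodule ℂ (Fin N → ℂ)
  | 0 => ⊤
  | k + 1 => Submodule.span ℂ
      {x | ∃ f g : Fin N → ℂ, g ∈ lcs N c k ∧ x = bilinBracket N c f g}

/-! ### Auxiliary development -/

lemma lcs_succ (N : ℕ) (c : ℕ → ℕ → ℕ → ℂ) (k : ℕ) :
    lcs N c (k + 1) = Submodule.span ℂ
      {x | ∃ f g : Fin N → ℂ, g ∈ lcs N c k ∧ x = bilinBracket N c f g} := rfl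

/-- Span of the standard basis vectors with (0-based) index ≥ m. -/
noncomputable def tailSp (N m : ℕ) : Submodule ℂ (Fin N → ℂ) :=
  Submodule.span ℂ
    (Set.range fun j : {j : Fin N // m ≤ (j : ℕ)} => Pi.single (j : Fin N) (1 : ℂ))

lemma apply_eq_zero_of_mem_tailSp {N m : ℕ} {x : Fin N → ℂ} (hx : x ∈ tailSp N m)
    {j : Fin N} (hj : (j : ℕ) < m) : x j = 0 := by
  induction hx using Submodule.span_induction with
  | mem y hy =>
      obtain ⟨a, rfl⟩ := hy
      exact Pi.single_eq_of_ne (fun h => by have := a.2; rw [h] at hj; omega) 1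
  | zero => rfl
  | add u v hu hv ihu ihv => simp only [Pi.add_apply, ihu, ihv, add_zero]
  | smul a u hu ih => simp only [Pi.smul_apply, ih, smul_zero]

lemma mem_tailSp_of {N m : ℕ} {x : Fin N → ℂ}
    (h : ∀ j : Fin N, (j : ℕ) < m → x j = 0) : x ∈ tailSp N m := by
  have hx : x = ∑ j : Fin N, x j • (Pi.single j (1 : ℂ) : Fin N → ℂ) := by
    conv_lhs => rw [← Finset.univ_sum_single x]
    refine Finset.sum_congr rfl fun j _ => ?_
    rw [← Pi.single_smul, smul_eq_mul, mul_one]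
  rw [hx]
  refine Submodule.sum_mem _ fun j _ => ?_
  by_cases hj : (j : ℕ) < m
  · rw [h j hj, zero_smul]; exact Submodule.zero_mem _
  · exact Submodule.smul_mem _ _
      (Submodule.subset_span ⟨⟨j, by omega⟩, rfl⟩)

lemma card_tail (N m : ℕ) : Fintype.card {j : Fin N // m ≤ (j : ℕ)} = N - m := by
  have e : {j : Fin N // m ≤ (j : ℕ)} ≃ Fin (N - m) :=
    { toFun := fun j => ⟨j.1.1 - m, by have := j.1.isLt; have := j.2; omega⟩
      invFun := fun i => ⟨⟨i.1 + m, by have := i.isLt; omega⟩, Nat.le_add_left m i.1⟩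
      left_inv := fun j => by
        apply Subtype.ext; apply Fin.ext; have := j.2; simp only [Fin.val_mk]; omega
      right_inv := fun i => by apply Fin.ext; simp only [Fin.val_mk]; omega }
  rw [Fintype.card_congr e, Fintype.card_fin]

lemma finrank_tailSp (N m : ℕ) : Module.finrank ℂ (tailSp N m) = N - m := by
  have heq : (fun j : {j : Fin N // m ≤ (j : ℕ)} => Pi.single (j : Fin N) (1 : ℂ))
      = (Pi.basisFun ℂ (Fin N)) ∘ (Subtype.val : {j : Fin N // m ≤ (j : ℕ)} → Fin N) := by
    funext j; simp [Pi.basisFun_apply, Function.comp]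
  rw [tailSp, heq, finrank_span_eq_card
    ((Pi.basisFun ℂ (Fin N)).linearIndependent.comp _ Subtype.val_injective), card_tail]

lemma bilinBracket_single (N : ℕ) (c : ℕ → ℕ → ℕ → ℂ) (a b : Fin N) :
    bilinBracket N c (Pi.single a 1) (Pi.single b 1)
      = fun k : Fin N => c ((a : ℕ) + 1) ((b : ℕ) + 1) ((k : ℕ) + 1) := by
  funext k
  simp [bilinBracket, Pi.single_apply, ite_mul, Finset.sum_ite_eq']

lemma bilinBracket_neg (N : ℕ) (c : ℕ → ℕ → ℕ → ℂ) (f g : Fin N → ℂ) :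
    bilinBracket N c (-f) g = -(bilinBracket N c f g) := by
  funext k
  simp [bilinBracket, Finset.sum_neg_distrib]

/-- `cQ n I J K = 0` when `2 ≤ J` and `K ≤ J`. -/
lemma cQ_eq_zero_of_le {n I J K : ℕ} (hn : 2 ≤ n) (hJ : 2 ≤ J) (hK : K ≤ J) :
    cQ n I J K = 0 := by
  unfold cQ
  rw [if_neg (by omega), if_neg (by omega), if_neg (by omega), if_neg (by omega)]
  ring

/-- `cQ n I J K = 0` when `K ≤ 2`. -/
lemma cQ_eq_zero_of_small {n I J K : ℕ} (hn : 2 ≤ n) (hK : K ≤ 2) :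
    cQ n I J K = 0 := by
  unfold cQ
  rw [if_neg (by omega), if_neg (by omega), if_neg (by omega), if_neg (by omega)]
  ring

lemma cQ_one {n J K : ℕ} (hn : 2 ≤ n) (hJ : 2 ≤ J) (hJ2 : J ≤ 2 * n - 2) :
    cQ n 1 J K = if K = J + 1 then 1 else 0 := by
  by_cases h : K = J + 1
  · subst h
    unfold cQ
    rw [if_pos ⟨rfl, hJ, hJ2, rfl⟩, if_neg (by omega), if_neg (by omega),
      if_neg (by omega), if_pos rfl]
    ring
  · unfold cQ
    rw [if_neg (by omega), if_neg (by omega), if_neg (by omega), if_neg (by omega), if_neg h]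
    ring

lemma cQ_two {n K : ℕ} (hn : 2 ≤ n) :
    cQ n 2 (2 * n - 2 + 1) K = if K = 2 * n then -1 else 0 := by
  by_cases h : K = 2 * n
  · subst h
    unfold cQ
    rw [if_neg (by omega), if_neg (by omega), if_neg (by omega),
      if_pos ⟨by omega, by omega, by omega, rfl⟩, if_pos rfl]
    norm_num
  · unfold cQ
    rw [if_neg (by omega), if_neg (by omega), if_neg (by omega), if_neg (by omega), if_neg h]
    ring

/-- Any standard basis vector `e_u` with 0-based index `u ≥ k+2` is a bracket `[f,g]`
with `g` a basis vector of 0-based index ≥ `k+1`. -/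
lemma single_mem_span_brackets {n : ℕ} (hn : 2 ≤ n) (k : ℕ) (P : Submodule ℂ (Fin (2 * n) → ℂ))
    (hP : ∀ j : Fin (2 * n), k + 1 ≤ (j : ℕ) → Pi.single j (1 : ℂ) ∈ P)
    (u : Fin (2 * n)) (hu : k + 2 ≤ (u : ℕ)) :
    Pi.single u (1 : ℂ) ∈ Submodule.span ℂ
      {x | ∃ f g : Fin (2 * n) → ℂ, g ∈ P ∧ x = bilinBracket (2 * n) (cQ n) f g} := by
  have hult := u.isLt
  by_cases hs : (u : ℕ) = 2 * n - 1
  · -- e_{2n} = [-e_2, e_{2n-1}]  (1-based)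
    refine Submodule.subset_span
      ⟨-(Pi.single (⟨1, by omega⟩ : Fin (2 * n)) 1),
        Pi.single (⟨2 * n - 2, by omega⟩ : Fin (2 * n)) 1,
        hP ⟨2 * n - 2, by omega⟩ (by simp only [Fin.val_mk]; omega), ?_⟩
    rw [bilinBracket_neg, bilinBracket_single]
    funext kk
    simp only [Pi.neg_apply, Fin.val_mk]
    rw [show (1 : ℕ) + 1 = 2 from rfl, cQ_two hn, Pi.single_apply]
    by_cases hkk : (kk : ℕ) = 2 * n - 1
    · rw [if_pos (show kk = u from Fin.ext (by omega)),
        if_pos (show (kk : ℕ) + 1 = 2 * n by omega)]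
      norm_num
    · rw [if_neg (show ¬kk = u from fun h => hkk (by rw [h]; omega)),
        if_neg (show ¬(kk : ℕ) + 1 = 2 * n by omega)]
      norm_num
  · -- e_{u+1} = [e_1, e_u]  (1-based)
    refine Submodule.subset_span
      ⟨Pi.single (⟨0, by omega⟩ : Fin (2 * n)) 1,
        Pi.single (⟨(u : ℕ) - 1, by omega⟩ : Fin (2 * n)) 1,
        hP ⟨(u : ℕ) - 1, by omega⟩ (by simp only [Fin.val_mk]; omega), ?_⟩
    rw [bilinBracket_single]
    funext kk
    simp only [Fin.val_mk]
    rw [show (0 : ℕ) + 1 = 1 from rfl, cQ_one hn (by omega) (by omega), Pi.single_apply]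
    by_cases hkk : (kk : ℕ) = (u : ℕ)
    · rw [if_pos (show kk = u from Fin.ext hkk),
        if_pos (show (kk : ℕ) + 1 = (u : ℕ) - 1 + 1 + 1 by omega)]
    · rw [if_neg (show ¬kk = u from fun h => hkk (by rw [h])),
        if_neg (show ¬(kk : ℕ) + 1 = (u : ℕ) - 1 + 1 + 1 by omega)]

lemma lcs_eq_tailSp (n : ℕ) (hn : 2 ≤ n) :
    ∀ k : ℕ, 1 ≤ k → lcs (2 * n) (cQ n) k = tailSp (2 * n) (k + 1) := by
  intro k hk
  induction k with
  | zero => omega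
  | succ k ih =>
    apply le_antisymm
    · -- upper bound
      rw [lcs_succ, Submodule.span_le]
      rintro x ⟨f, g, hg, rfl⟩
      refine mem_tailSp_of fun u hu => ?_
      refine Finset.sum_eq_zero fun i _ => Finset.sum_eq_zero fun j _ => ?_
      rcases Nat.eq_zero_or_pos k with hk0 | hk1
      · subst hk0
        rw [cQ_eq_zero_of_small hn (by omega), mul_zero]
      · rw [ih hk1] at hg
        by_cases hj : (j : ℕ) < k + 1
        · rw [apply_eq_zero_of_mem_tailSp hg hj, mul_zero, zero_mul]
        · rw [cQ_eq_zero_of_le hn (by omega) (by omega), mul_zero]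
    · -- lower bound
      rw [tailSp, Submodule.span_le, lcs_succ]
      rintro x ⟨⟨u, hu⟩, rfl⟩
      refine single_mem_span_brackets hn k (lcs (2 * n) (cQ n) k) (fun j hj => ?_) u hu
      rcases Nat.eq_zero_or_pos k with hk0 | hk1
      · subst hk0; exact Submodule.mem_top
      · rw [ih hk1]
        exact Submodule.subset_span ⟨⟨j, hj⟩, rfl⟩

/-- The algebra `Q_{2n}` is filiform: the terms of its lower central series
satisfy `dim Q_{2n}^i = 2n - i` for `2 ≤ i ≤ 2n`. -/
theorem Q2n_is_filiform (n : ℕ) (hn : 2 ≤ n) :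
    ∀ i : ℕ, 2 ≤ i → i ≤ 2 * n →
      Module.finrank ℂ (lcs (2 * n) (cQ n) (i - 1)) = 2 * n - i := by
  intro i hi _
  rw [lcs_eq_tailSp n hn (i - 1) (by omega), show i - 1 + 1 = i by omega]
  exact finrank_tailSp _ _
end

section
/- The action of R_n on V = ℂ^n given by (x_i, e_1) = x_{i+1} for 1 ≤ i ≤ n-2, (x_i, e_2) = x_{i+2} for 1 ≤ i ≤ n-3, (x_{n+1-j}, e_j) = x_n for 2 ≤ j ≤ n, and all other products of basis vectors zero, makes V a right R_n-module: (v·[e,f]) = (v·e)·f - (v·f)·e for all v ∈ V and e,f ∈ R_n. -/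
/-- Structure constants of the action of `R_n` on `V = ℂ^n`: `aRmod n i j k` is
the coefficient of `x_k` in `x_i · e_j`, given by `(x_i, e_1) = x_{i+1}`
(`1 ≤ i ≤ n-2`), `(x_i, e_2) = x_{i+2}` (`1 ≤ i ≤ n-3`), and
`(x_{n+1-j}, e_j) = x_n` (`2 ≤ j ≤ n`). -/
noncomputable def aRmod (n i j k : ℕ) : ℂ :=
  (if j = 1 ∧ 1 ≤ i ∧ i ≤ n - 2 ∧ k = i + 1 then 1 else 0)
  + (if j = 2 ∧ 1 ≤ i ∧ i ≤ n - 3 ∧ k = i + 2 then 1 else 0)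
  + (if 2 ≤ j ∧ j ≤ n ∧ i = n + 1 - j ∧ k = n then 1 else 0)

/-- Collapse of a sum over `Fin n` of an indicator pinned at a single value `t`. -/
lemma Rn_collapse (n : ℕ) (P1 P2 P3 : Prop) [Decidable P1] [Decidable P2] [Decidable P3]
    (t : ℕ) (g : ℕ → ℂ)
    (hrange : P1 → P2 → P3 → 1 ≤ t ∧ t ≤ n) :
    ∑ j : Fin n, (if P1 ∧ P2 ∧ P3 ∧ (j : ℕ) + 1 = t then (1:ℂ) else 0) * g ((j : ℕ) + 1)
      = if P1 ∧ P2 ∧ P3 then g t else 0 := by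
  by_cases hP : P1 ∧ P2 ∧ P3
  · obtain ⟨h1, h2⟩ := hrange hP.1 hP.2.1 hP.2.2
    rw [if_pos hP, Finset.sum_eq_single (⟨t - 1, by omega⟩ : Fin n)]
    · have ht : (t - 1) + 1 = t := by omega
      simp [hP.1, hP.2.1, hP.2.2, ht]
    · intro b _ hb
      have hbt : (b : ℕ) + 1 ≠ t := fun h => hb (by apply Fin.ext; simp; omega)
      simp [hbt]
    · intro h; exact absurd (Finset.mem_univ _) h
  · rw [if_neg hP]
    refine Finset.sum_eq_zero fun j _ => ?_
    rw [if_neg (fun h => hP ⟨h.1, h.2.1, h.2.2.1⟩), zero_mul]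

lemma Rn_sum_rot {M : Type*} [AddCommMonoid M] {α : Type*} [Fintype α] (f : α → α → α → M) :
    ∑ a : α, ∑ b : α, ∑ c : α, f a b c = ∑ b : α, ∑ c : α, ∑ a : α, f a b c := by
  rw [Finset.sum_comm]
  exact Finset.sum_congr rfl fun b _ => Finset.sum_comm

lemma Rn_swap12 {M : Type*} [AddCommMonoid M] {α : Type*} [Fintype α] (f : α → α → α → α → M) :
    ∑ a : α, ∑ b : α, ∑ c : α, ∑ d : α, f a b c d
      = ∑ b : α, ∑ a : α, ∑ c : α, ∑ d : α, f a b c d := Finset.sum_comm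

lemma Rn_swap23 {M : Type*} [AddCommMonoid M] {α : Type*} [Fintype α] (f : α → α → α → α → M) :
    ∑ a : α, ∑ b : α, ∑ c : α, ∑ d : α, f a b c d
      = ∑ a : α, ∑ c : α, ∑ b : α, ∑ d : α, f a b c d :=
  Finset.sum_congr rfl fun _ _ => Finset.sum_comm

lemma Rn_swap34 {M : Type*} [AddCommMonoid M] {α : Type*} [Fintype α] (f : α → α → α → α → M) :
    ∑ a : α, ∑ b : α, ∑ c : α, ∑ d : α, f a b c d
      = ∑ a : α, ∑ b : α, ∑ d : α, ∑ c : α, f a b c d :=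
  Finset.sum_congr rfl fun _ _ => Finset.sum_congr rfl fun _ _ => Finset.sum_comm

/-- Abstract reduction: the module condition follows from a structure-constant identity. -/
lemma Rn_reduce {N : ℕ} (A C : Fin N → Fin N → Fin N → ℂ) (v e f : Fin N → ℂ) (k : Fin N)
    (key : ∀ i p q : Fin N,
      (∑ j : Fin N, C p q j * A i j k)
        = ∑ m : Fin N, (A i p m * A m q k - A i q m * A m p k)) :
    (∑ i : Fin N, ∑ j : Fin N, v i * (∑ p : Fin N, ∑ q : Fin N, e p * f q * C p q j) * A i j k)
      = (∑ m : Fin N, ∑ q : Fin N,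
          (∑ i : Fin N, ∑ p : Fin N, v i * e p * A i p m) * f q * A m q k)
        - (∑ m : Fin N, ∑ p : Fin N,
          (∑ i : Fin N, ∑ q : Fin N, v i * f q * A i q m) * e p * A m p k) := by
  have hL : (∑ i : Fin N, ∑ j : Fin N,
        v i * (∑ p : Fin N, ∑ q : Fin N, e p * f q * C p q j) * A i j k)
      = ∑ i : Fin N, ∑ p : Fin N, ∑ q : Fin N,
          (v i * e p * f q) * ∑ j : Fin N, C p q j * A i j k := by
    refine Finset.sum_congr rfl fun i _ => ?_
    rw [show (∑ j : Fin N, v i * (∑ p : Fin N, ∑ q : Fin N, e p * f q * C p q j) * A i j k)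
        = ∑ j : Fin N, ∑ p : Fin N, ∑ q : Fin N, (v i * e p * f q) * (C p q j * A i j k) from
      Finset.sum_congr rfl fun j _ => by
        simp only [Finset.mul_sum, Finset.sum_mul]
        exact Finset.sum_congr rfl fun p _ => Finset.sum_congr rfl fun q _ => by ring]
    rw [Rn_sum_rot]
    exact Finset.sum_congr rfl fun p _ => Finset.sum_congr rfl fun q _ =>
      (Finset.mul_sum _ _ _).symm
  have hR1 : (∑ m : Fin N, ∑ q : Fin N,
        (∑ i : Fin N, ∑ p : Fin N, v i * e p * A i p m) * f q * A m q k)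
      = ∑ i : Fin N, ∑ p : Fin N, ∑ q : Fin N,
          (v i * e p * f q) * ∑ m : Fin N, A i p m * A m q k := by
    rw [show (∑ m : Fin N, ∑ q : Fin N,
        (∑ i : Fin N, ∑ p : Fin N, v i * e p * A i p m) * f q * A m q k)
        = ∑ m : Fin N, ∑ q : Fin N, ∑ i : Fin N, ∑ p : Fin N,
            (v i * e p * f q) * (A i p m * A m q k) from
      Finset.sum_congr rfl fun m _ => Finset.sum_congr rfl fun q _ => by
        simp only [Finset.sum_mul]
        exact Finset.sum_congr rfl fun i _ => Finset.sum_congr rfl fun p _ => by ring]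
    rw [Rn_swap12, Rn_swap23, Rn_swap12, Rn_swap34, Rn_swap23]
    exact Finset.sum_congr rfl fun i _ => Finset.sum_congr rfl fun p _ =>
      Finset.sum_congr rfl fun q _ => (Finset.mul_sum _ _ _).symm
  have hR2 : (∑ m : Fin N, ∑ p : Fin N,
        (∑ i : Fin N, ∑ q : Fin N, v i * f q * A i q m) * e p * A m p k)
      = ∑ i : Fin N, ∑ p : Fin N, ∑ q : Fin N,
          (v i * e p * f q) * ∑ m : Fin N, A i q m * A m p k := by
    rw [show (∑ m : Fin N, ∑ p : Fin N,
        (∑ i : Fin N, ∑ q : Fin N, v i * f q * A i q m) * e p * A m p k)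
        = ∑ m : Fin N, ∑ p : Fin N, ∑ i : Fin N, ∑ q : Fin N,
            (v i * e p * f q) * (A i q m * A m p k) from
      Finset.sum_congr rfl fun m _ => Finset.sum_congr rfl fun p _ => by
        simp only [Finset.sum_mul]
        exact Finset.sum_congr rfl fun i _ => Finset.sum_congr rfl fun q _ => by ring]
    rw [Rn_swap12, Rn_swap23, Rn_swap12, Rn_swap34]
    exact Finset.sum_congr rfl fun i _ => Finset.sum_congr rfl fun p _ =>
      Finset.sum_congr rfl fun q _ => (Finset.mul_sum _ _ _).symm
  rw [hL, hR1, hR2, ← Finset.sum_sub_distrib]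
  refine Finset.sum_congr rfl fun i _ => ?_
  rw [← Finset.sum_sub_distrib]
  refine Finset.sum_congr rfl fun p _ => ?_
  rw [← Finset.sum_sub_distrib]
  refine Finset.sum_congr rfl fun q _ => ?_
  rw [key i p q, ← mul_sub, ← Finset.sum_sub_distrib]

lemma aRmod_n_eq_zero (n : ℕ) (hn : 5 ≤ n) (x y : ℕ) : aRmod n n x y = 0 := by
  unfold aRmod
  rw [if_neg (by omega), if_neg (by omega), if_neg (by omega)]
  norm_num

set_option maxHeartbeats 1000000 in
/-- The structure-constant identity for the action of `R_n` on `V`. -/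
lemma Rn_key (n : ℕ) (hn : 5 ≤ n) (a b c d : ℕ) (ha : 1 ≤ a) (ha' : a ≤ n)
    (hb : 1 ≤ b) (hb' : b ≤ n) (hc : 1 ≤ c) (hc' : c ≤ n) (hd : 1 ≤ d) (hd' : d ≤ n) :
    (∑ j : Fin n, cR n b c ((j:ℕ)+1) * aRmod n a ((j:ℕ)+1) d)
      = ∑ m : Fin n, (aRmod n a b ((m:ℕ)+1) * aRmod n ((m:ℕ)+1) c d
          - aRmod n a c ((m:ℕ)+1) * aRmod n ((m:ℕ)+1) b d) := by
  have hL : (∑ j : Fin n, cR n b c ((j:ℕ)+1) * aRmod n a ((j:ℕ)+1) d)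
      = ((if b = 1 ∧ 2 ≤ c ∧ c ≤ n - 1 then aRmod n a (c+1) d else 0)
        - (if c = 1 ∧ 2 ≤ b ∧ b ≤ n - 1 then aRmod n a (b+1) d else 0))
        + (if b = 2 ∧ 3 ≤ c ∧ c ≤ n - 2 then aRmod n a (c+2) d else 0)
        - (if c = 2 ∧ 3 ≤ b ∧ b ≤ n - 2 then aRmod n a (b+2) d else 0) := by
    simp only [cR, sub_mul, add_mul, Finset.sum_sub_distrib, Finset.sum_add_distrib]
    rw [Rn_collapse n (b = 1) (2 ≤ c) (c ≤ n - 1) (c+1) (fun x => aRmod n a x d) (by omega),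
        Rn_collapse n (c = 1) (2 ≤ b) (b ≤ n - 1) (b+1) (fun x => aRmod n a x d) (by omega),
        Rn_collapse n (b = 2) (3 ≤ c) (c ≤ n - 2) (c+2) (fun x => aRmod n a x d) (by omega),
        Rn_collapse n (c = 2) (3 ≤ b) (b ≤ n - 2) (b+2) (fun x => aRmod n a x d) (by omega)]
  have hR : (∑ m : Fin n, (aRmod n a b ((m:ℕ)+1) * aRmod n ((m:ℕ)+1) c d
          - aRmod n a c ((m:ℕ)+1) * aRmod n ((m:ℕ)+1) b d))
      = (((if b = 1 ∧ 1 ≤ a ∧ a ≤ n - 2 then aRmod n (a+1) c d else 0)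
          + (if b = 2 ∧ 1 ≤ a ∧ a ≤ n - 3 then aRmod n (a+2) c d else 0))
        - ((if c = 1 ∧ 1 ≤ a ∧ a ≤ n - 2 then aRmod n (a+1) b d else 0)
          + (if c = 2 ∧ 1 ≤ a ∧ a ≤ n - 3 then aRmod n (a+2) b d else 0))) := by
    simp only [Finset.sum_sub_distrib]
    conv_lhs =>
      rw [show (aRmod n a b : ℕ → ℂ) = fun x =>
          (if b = 1 ∧ 1 ≤ a ∧ a ≤ n - 2 ∧ x = a + 1 then (1:ℂ) else 0)
          + (if b = 2 ∧ 1 ≤ a ∧ a ≤ n - 3 ∧ x = a + 2 then 1 else 0)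
          + (if 2 ≤ b ∧ b ≤ n ∧ a = n + 1 - b ∧ x = n then 1 else 0) from rfl,
        show (aRmod n a c : ℕ → ℂ) = fun x =>
          (if c = 1 ∧ 1 ≤ a ∧ a ≤ n - 2 ∧ x = a + 1 then (1:ℂ) else 0)
          + (if c = 2 ∧ 1 ≤ a ∧ a ≤ n - 3 ∧ x = a + 2 then 1 else 0)
          + (if 2 ≤ c ∧ c ≤ n ∧ a = n + 1 - c ∧ x = n then 1 else 0) from rfl]
    simp only [add_mul, Finset.sum_add_distrib]
    rw [Rn_collapse n (b = 1) (1 ≤ a) (a ≤ n - 2) (a+1) (fun x => aRmod n x c d) (by omega),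
        Rn_collapse n (b = 2) (1 ≤ a) (a ≤ n - 3) (a+2) (fun x => aRmod n x c d) (by omega),
        Rn_collapse n (2 ≤ b) (b ≤ n) (a = n + 1 - b) n (fun x => aRmod n x c d) (by omega),
        Rn_collapse n (c = 1) (1 ≤ a) (a ≤ n - 2) (a+1) (fun x => aRmod n x b d) (by omega),
        Rn_collapse n (c = 2) (1 ≤ a) (a ≤ n - 3) (a+2) (fun x => aRmod n x b d) (by omega),
        Rn_collapse n (2 ≤ c) (c ≤ n) (a = n + 1 - c) n (fun x => aRmod n x b d) (by omega)]
    simp only [aRmod_n_eq_zero n hn, ite_self]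
    ring
  rw [hL, hR]
  rcases show b = 1 ∨ b = 2 ∨ 3 ≤ b from by omega with rfl | rfl | hb3 <;>
    rcases show c = 1 ∨ c = 2 ∨ 3 ≤ c from by omega with rfl | rfl | hc3 <;>
    norm_num
  · norm_num [aRmod, (show 2 ≤ n-1 from by omega), (show 3 ≤ n from by omega),
      (show 2 ≤ n from by omega), (show 1 ≤ n from by omega)]
    try (split_ifs <;> (try norm_num) <;> omega)
  · norm_num [aRmod, (show 2 ≤ n-1 from by omega), (show 3 ≤ n from by omega),
      (show 2 ≤ n from by omega), (show 1 ≤ n from by omega),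
      (show ¬(c=1) from by omega), (show ¬(c=2) from by omega)]
    try (split_ifs <;> (try norm_num) <;> omega)
  · norm_num [aRmod, (show 2 ≤ n-1 from by omega), (show 3 ≤ n from by omega),
      (show 2 ≤ n from by omega), (show 1 ≤ n from by omega)]
    try (split_ifs <;> (try norm_num) <;> omega)
  · norm_num [aRmod, (show 2 ≤ n-1 from by omega), (show 3 ≤ n from by omega),
      (show 2 ≤ n from by omega), (show 1 ≤ n from by omega),
      (show ¬(c=1) from by omega), (show ¬(c=2) from by omega)]
    try (split_ifs <;> (try norm_num) <;> omega)
  · norm_num [aRmod, (show 2 ≤ n-1 from by omega), (show 3 ≤ n from by omega),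
      (show 2 ≤ n from by omega), (show 1 ≤ n from by omega),
      (show ¬(b=1) from by omega), (show ¬(b=2) from by omega)]
    try (split_ifs <;> (try norm_num) <;> omega)
  · norm_num [aRmod, (show 2 ≤ n-1 from by omega), (show 3 ≤ n from by omega),
      (show 2 ≤ n from by omega), (show 1 ≤ n from by omega),
      (show ¬(b=1) from by omega), (show ¬(b=2) from by omega)]
    try (split_ifs <;> (try norm_num) <;> omega)
  · norm_num [aRmod, (show 2 ≤ n-1 from by omega), (show 3 ≤ n from by omega),
      (show 2 ≤ n from by omega), (show 1 ≤ n from by omega),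
      (show ¬(b=1) from by omega), (show ¬(b=2) from by omega),
      (show ¬(c=1) from by omega), (show ¬(c=2) from by omega)]

/-- The stated action makes `V = ℂ^n` a right `R_n`-module:
`v·[e,f] = (v·e)·f - (v·f)·e` for all `v ∈ V` and `e, f ∈ R_n`. -/
theorem Rn_module_structure (n : ℕ) (hn : 5 ≤ n) :
    ∀ v e f : Fin n → ℂ,
      bilinBracket n (aRmod n) v (bilinBracket n (cR n) e f)
        = bilinBracket n (aRmod n) (bilinBracket n (aRmod n) v e) f
          - bilinBracket n (aRmod n) (bilinBracket n (aRmod n) v f) e := by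
  intro v e f
  funext k
  simp only [bilinBracket, Pi.sub_apply]
  exact Rn_reduce (fun i j k' => aRmod n ((i:ℕ)+1) ((j:ℕ)+1) ((k':ℕ)+1))
    (fun i j k' => cR n ((i:ℕ)+1) ((j:ℕ)+1) ((k':ℕ)+1)) v e f k
    (fun i p q => Rn_key n hn ((i:ℕ)+1) ((p:ℕ)+1) ((q:ℕ)+1) ((k:ℕ)+1)
      (by omega) i.isLt (by omega) p.isLt (by omega) q.isLt (by omega) k.isLt)
end
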